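/- arXiv:0711.4043 — 13 statements merged into one kernel-verified Lean document; each statement's English description precedes it below -/
import Mathlib

section
/- Let f ∈ ℂ[x₁,…,x_d] be an upper polynomial and let a ∈ ℝ. Then the polynomial g(x₂,…,x_d) = f(a, x₂,…,x_d) obtained by substituting a for x₁ is either the zero polynomial or an upper polynomial in d−1 variables; that is, either g = 0 or g(σ₂,…,σ_d) ≠ 0 whenever Im σᵢ > 0 for all i = 2,…,d. -/
/-- `f ∈ ℂ[x₁,…,x_d]` is an *upper polynomial* if it does not vanish when all
variables are given values in the open upper half plane.  (The zero polynomial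
never satisfies this, so it is automatically excluded.) -/
def IsUpper {d : ℕ} (f : MvPolynomial (Fin d) ℂ) : Prop :=
  ∀ σ : Fin d → ℂ, (∀ i, 0 < (σ i).im) → MvPolynomial.eval σ f ≠ 0

/-! If `g = f(a, ·)` is nonzero but vanishes at a point `σ` of the upper half plane, restrict it
to a complex line `t ↦ σ + t v` along which it is a nonzero one-variable polynomial, and choose a
small circle `|t| = r` free of its zeros, inside which `σ + t v` stays in the upper half plane.
For `Im z > 0` the function `t ↦ f(z, σ + t v)` has no zero on the closed disc, so by the minimum
modulus principle its modulus at some point of the circle is at most its modulus at the centre.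
This inequality survives the limit `z → a`, where the value at the centre is `g(σ) = 0`: hence
`g` vanishes somewhere on the circle, a contradiction (Hurwitz's argument). -/

open MvPolynomial Metric Set
open scoped Topology

theorem MvPolynomial.polynomial_eval_aeval {R σ : Type*} [CommSemiring R] (x : R)
    (g : σ → Polynomial R) (p : MvPolynomial σ R) :
    Polynomial.eval x (aeval g p) = eval (fun i => Polynomial.eval x (g i)) p := by
  induction p using MvPolynomial.induction_on with
  | C c => simp
  | add p q hp hq => simp [hp, hq]
  | mul_X p i hp => simp [hp]

theorem MvPolynomial.eval_aeval_finCases_C_X {R : Type*} [CommSemiring R] {d : ℕ}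
    (f : MvPolynomial (Fin (d + 1)) R) (a : R) (x : Fin d → R) :
    eval x (aeval (Fin.cases (C a) X) f) = eval (Fin.cases a x) f := by
  induction f using MvPolynomial.induction_on with
  | C c => simp
  | add p q hp hq => simp only [map_add, hp, hq]
  | mul_X p j hp =>
    simp only [map_mul, hp]
    congr 1
    induction j using Fin.cases <;> simp

theorem MvPolynomial.differentiable_eval_comp {𝕜 E ι : Type*} [NontriviallyNormedField 𝕜]
    [NormedAddCommGroup E] [NormedSpace 𝕜 E] (p : MvPolynomial ι 𝕜) {φ : E → ι → 𝕜}
    (hφ : ∀ i, Differentiable 𝕜 (φ · i)) : Differentiable 𝕜 fun x => eval (φ x) p := by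
  induction p using MvPolynomial.induction_on with
  | C c => simp
  | add p q hp hq => simp only [map_add]; exact hp.add hq
  | mul_X p i hp => simp only [map_mul, eval_X]; exact hp.mul (hφ i)

theorem Complex.exists_mem_sphere_norm_le_norm_center {F : ℂ → ℂ} {c : ℂ} {r : ℝ} (hr : 0 < r)
    (hF : DifferentiableOn ℂ F (closedBall c r)) (hne : ∀ t ∈ closedBall c r, F t ≠ 0) :
    ∃ t ∈ sphere c r, ‖F t‖ ≤ ‖F c‖ := by
  have hdiff : DiffContOnCl ℂ (fun t => (F t)⁻¹) (ball c r) := by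
    apply DifferentiableOn.diffContOnCl
    rw [closure_ball c hr.ne']
    exact hF.inv hne
  obtain ⟨t, ht, hmax⟩ := Complex.exists_mem_frontier_isMaxOn_norm isBounded_ball
    (nonempty_ball.2 hr) hdiff
  rw [frontier_ball c hr.ne'] at ht
  refine ⟨t, ht, ?_⟩
  have hc : ‖(F c)⁻¹‖ ≤ ‖(F t)⁻¹‖ := hmax (subset_closure (mem_ball_self hr))
  rw [norm_inv, norm_inv] at hc
  exact (inv_le_inv₀ (norm_pos_iff.2 (hne c (mem_closedBall_self hr.le)))
    (norm_pos_iff.2 (hne t (sphere_subset_closedBall ht)))).1 hc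

theorem IsCompact.isClosed_setOf_exists_mem {X Y : Type*} [TopologicalSpace X]
    [TopologicalSpace Y] {K : Set Y} (hK : IsCompact K) {s : Set (X × Y)} (hs : IsClosed s) :
    IsClosed {x | ∃ y ∈ K, (x, y) ∈ s} := by
  have : CompactSpace K := isCompact_iff_compactSpace.1 hK
  have hs' : IsClosed {p : X × K | (p.1, (p.2 : Y)) ∈ s} :=
    hs.preimage (by fun_prop)
  convert isClosedMap_fst_of_compactSpace _ hs' using 1
  ext x
  simp

theorem Complex.exists_mem_sphere_eq_zero_of_mem_closure {X : Type*} [TopologicalSpace X]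
    {F : X → ℂ → ℂ} (hF : Continuous (Function.uncurry F)) {S : Set X} {c : ℂ} {r : ℝ}
    (hr : 0 < r) (hd : ∀ x ∈ S, DifferentiableOn ℂ (F x) (closedBall c r))
    (hne : ∀ x ∈ S, ∀ t ∈ closedBall c r, F x t ≠ 0) {x₀ : X} (hx₀ : x₀ ∈ closure S)
    (hc : F x₀ c = 0) : ∃ t ∈ sphere c r, F x₀ t = 0 := by
  have hclosed : IsClosed {x | ∃ t ∈ sphere c r, ‖F x t‖ ≤ ‖F x c‖} :=
    (isCompact_sphere c r).isClosed_setOf_exists_mem <| isClosed_le hF.norm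
      (hF.comp (continuous_fst.prodMk continuous_const)).norm
  obtain ⟨t, ht, hle⟩ := closure_minimal
    (fun x hx => Complex.exists_mem_sphere_norm_le_norm_center hr (hd x hx) (hne x hx))
    hclosed hx₀
  rw [hc, norm_zero] at hle
  exact ⟨t, ht, norm_le_zero_iff.1 hle⟩

theorem Polynomial.exists_closedBall_subset_forall_sphere_eval_ne_zero {𝕜 : Type*}
    [NormedField 𝕜] {q : Polynomial 𝕜} (hq : q ≠ 0) {c : 𝕜} {U : Set 𝕜} (hU : U ∈ 𝓝 c) :
    ∃ r > 0, closedBall c r ⊆ U ∧ ∀ t ∈ sphere c r, q.eval t ≠ 0 := by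
  classical
  obtain ⟨ε, hε, hεU⟩ := nhds_basis_closedBall.mem_iff.1 hU
  obtain ⟨r, ⟨hr, hrε⟩, hroot⟩ := (Ioc_infinite hε).exists_notMem_finset
    (q.roots.toFinset.image (dist · c))
  refine ⟨r, hr, (closedBall_subset_closedBall hrε).trans hεU, fun t ht hqt => hroot ?_⟩
  exact Finset.mem_image.2 ⟨t, by simpa [hq] using hqt, ht⟩

theorem MvPolynomial.exists_forall_mem_nhds_exists_sphere_eval_ne_zero {𝕜 ι : Type*}
    [NormedField 𝕜] [Infinite 𝕜] {g : MvPolynomial ι 𝕜} (hg : g ≠ 0) (σ : ι → 𝕜) :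
    ∃ v : ι → 𝕜, ∀ U ∈ 𝓝 (0 : 𝕜),
      ∃ r > 0, closedBall 0 r ⊆ U ∧ ∀ t ∈ sphere (0 : 𝕜) r, eval (σ + t • v) g ≠ 0 := by
  obtain ⟨τ, hτ⟩ : ∃ τ, eval τ g ≠ 0 := by
    by_contra! h
    exact hg (MvPolynomial.funext fun x => by simp [h])
  let q : Polynomial 𝕜 :=
    aeval (fun i => Polynomial.C (σ i) + Polynomial.X * Polynomial.C (τ i - σ i)) g
  have hq_eval : ∀ t, q.eval t = eval (σ + t • (τ - σ)) g := fun t => by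
    simp only [q, polynomial_eval_aeval, Polynomial.eval_add, Polynomial.eval_mul,
      Polynomial.eval_C, Polynomial.eval_X]
    rfl
  have hq : q ≠ 0 := fun h => hτ (by simpa [h] using (hq_eval 1).symm)
  refine ⟨τ - σ, fun U hU => ?_⟩
  obtain ⟨r, hr, hball, hsphere⟩ := q.exists_closedBall_subset_forall_sphere_eval_ne_zero hq hU
  exact ⟨r, hr, hball, fun t ht => hq_eval t ▸ hsphere t ht⟩

/-- Substituting a real number `a` for the first variable of an upper polynomial
in `d+1` variables gives either the zero polynomial or an upper polynomial in the
remaining `d` variables. -/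
theorem substitute_real_mem_upper_or_zero {d : ℕ}
    (f : MvPolynomial (Fin (d + 1)) ℂ) (a : ℝ) (hf : IsUpper f) :
    MvPolynomial.aeval
        (Fin.cases (MvPolynomial.C (a : ℂ)) (fun i => MvPolynomial.X i)) f = 0 ∨
      IsUpper (MvPolynomial.aeval
        (Fin.cases (MvPolynomial.C (a : ℂ)) (fun i => MvPolynomial.X i)) f) := by
  set g := aeval (Fin.cases (C (a : ℂ)) X) f with hg_def
  refine or_iff_not_imp_left.2 fun hg σ hσ hgσ => ?_
  obtain ⟨v, hv⟩ := exists_forall_mem_nhds_exists_sphere_eval_ne_zero hg σ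
  have hU : {t : ℂ | ∀ i, 0 < ((σ + t • v) i).im} ∈ 𝓝 0 := by
    simp only [ofPred_forall]
    refine (isOpen_iInter_of_finite fun i => isOpen_lt continuous_const ?_).mem_nhds ?_
    · fun_prop
    · simpa using hσ
  obtain ⟨r, hr, hball, hsphere⟩ := hv _ hU
  have hcenter : eval (Fin.cases (a : ℂ) (σ + (0 : ℂ) • v)) f = 0 := by
    rwa [zero_smul, add_zero, ← eval_aeval_finCases_C_X]
  obtain ⟨t, ht, hgt⟩ := Complex.exists_mem_sphere_eq_zero_of_mem_closure
    (F := fun z t => eval (Fin.cases z (σ + t • v)) f) (S := {z | 0 < z.im})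
    ((continuous_eval f).comp (continuous_pi fun j => j.cases (by simpa using continuous_fst)
      fun i => by simp only [Fin.cases_succ]; fun_prop))
    hr (fun z _ => (f.differentiable_eval_comp fun j => j.cases (by simp)
      fun i => by simp only [Fin.cases_succ]; fun_prop).differentiableOn)
    (fun z hz t ht => hf _ fun j => j.cases hz (hball ht)) (by simp) hcenter
  exact hsphere t ht (by rwa [hg_def, eval_aeval_finCases_C_X])
end

section
/- Suppose g(x₁,…,x_d, y) = Σᵢ₌₀ⁿ fᵢ(x₁,…,x_d)·yⁱ is an upper polynomial in d+1 variables, where n is at least the degree of g in the variable y. Then the reversed polynomial Σᵢ₌₀ⁿ fᵢ(x₁,…,x_d)·(−y)^{n−i} is also an upper polynomial in d+1 variables. -/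
/-- A polynomial in the variables `x₁,…,x_d` and one distinguished variable `y`
(encoded as a univariate polynomial over `ℂ[x₁,…,x_d]`) is an upper polynomial
in `d+1` variables. -/
def IsUpperY {d : ℕ} (f : Polynomial (MvPolynomial (Fin d) ℂ)) : Prop :=
  ∀ (σ : Fin d → ℂ) (τ : ℂ), (∀ i, 0 < (σ i).im) → 0 < τ.im →
    Polynomial.eval₂ (MvPolynomial.eval σ) τ f ≠ 0

namespace Polynomial

open Finset

variable {R : Type*} [CommRing R]

theorem reflect_eq_sum_range {p : R[X]} {n : ℕ} (hn : p.natDegree ≤ n) :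
    p.reflect n = ∑ i ∈ range (n + 1), C (p.coeff i) * X ^ (n - i) := by
  conv_lhs => rw [p.as_sum_range_C_mul_X_pow' (Nat.lt_succ_of_le hn)]
  rw [← AddMonoidHom.mk'_apply (reflect n) (reflect_add · · n), map_sum]
  refine sum_congr rfl fun i hi => ?_
  rw [AddMonoidHom.mk'_apply, reflect_C_mul_X_pow,
    revAt_le (Nat.lt_succ_iff.mp (mem_range.mp hi))]

theorem sum_range_C_coeff_mul_neg_X_pow {p : R[X]} {n : ℕ} (hn : p.natDegree ≤ n) :
    ∑ i ∈ range (n + 1), C (p.coeff i) * (-X) ^ (n - i) = (p.reflect n).comp (-X) := by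
  simp [reflect_eq_sum_range hn, sum_comp]

end Polynomial

theorem Complex.im_neg_inv_pos {τ : ℂ} (hτ : 0 < τ.im) : 0 < (-τ)⁻¹.im :=
  UpperHalfPlane.im_inv_neg_coe_pos ⟨τ, hτ⟩

/-- Reversal in the distinguished variable `y` (with a sign change) preserves
upper polynomials:  if `g = Σᵢ₌₀ⁿ fᵢ(𝐱) yⁱ ∈ U_{d+1}` with `n ≥ deg_y g`,
then `Σᵢ₌₀ⁿ fᵢ(𝐱) (−y)^{n−i} ∈ U_{d+1}`. -/
theorem reversal_isUpper {d : ℕ} (g : Polynomial (MvPolynomial (Fin d) ℂ))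
    (n : ℕ) (hn : g.natDegree ≤ n) (hg : IsUpperY g) :
    IsUpperY (∑ i ∈ Finset.range (n + 1),
      Polynomial.C (g.coeff i) * (-Polynomial.X) ^ (n - i)) := by
  intro σ τ hσ hτ
  have hτ0 : τ ≠ 0 := fun h => by simp [h] at hτ
  have : Invertible (-τ)⁻¹ := invertibleOfNonzero (by simpa using hτ0)
  have hinv : ⅟(-τ)⁻¹ = -τ := by rw [invOf_eq_inv, inv_inv]
  rw [Polynomial.sum_range_C_coeff_mul_neg_X_pow hn, Polynomial.eval₂_comp,
    Polynomial.eval₂_neg, Polynomial.eval₂_X, ← hinv, Ne,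
    Polynomial.eval₂_reflect_eq_zero_iff _ _ _ _ hn]
  exact hg σ _ hσ (Complex.im_neg_inv_pos hτ)
end

section
/- If f ∈ ℂ[x₁,…,x_d] is an upper polynomial, then for each i the partial derivative ∂f/∂xᵢ is either the zero polynomial or an upper polynomial. -/
section

open Metric Set Filter Topology Polynomial

namespace MvPolynomial

section

variable {R A B ι : Type*} [CommSemiring R] [CommSemiring A] [Algebra R A] [CommSemiring B]
  [Algebra R B] [DecidableEq ι]

noncomputable def evalExcept (i : ι) (v : ι → A) : MvPolynomial ι R →ₐ[R] A[X] :=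
  aeval (Function.update (fun j => Polynomial.C (v j)) i Polynomial.X)

theorem eval_evalExcept (i : ι) (v : ι → A) (a : A) (f : MvPolynomial ι R) :
    (evalExcept i v f).eval a = aeval (Function.update v i a) f := by
  induction f using MvPolynomial.induction_on with
  | C r => simp [evalExcept, Polynomial.algebraMap_apply]
  | add p q hp hq => simp [hp, hq]
  | mul_X p j hp =>
    rcases eq_or_ne j i with rfl | hj <;> simp_all [evalExcept]

theorem map_evalExcept (i : ι) (v : ι → A) (φ : A →ₐ[R] B) (f : MvPolynomial ι R) :
    (evalExcept i v f).map (φ : A →+* B) = evalExcept i (φ ∘ v) f := by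
  induction f using MvPolynomial.induction_on with
  | C r => simp [evalExcept, Polynomial.algebraMap_apply]
  | add p q hp hq => simp [hp, hq]
  | mul_X p j hp =>
    rcases eq_or_ne j i with rfl | hj <;> simp_all [evalExcept]

theorem derivative_evalExcept (i : ι) (v : ι → A) (f : MvPolynomial ι R) :
    derivative (evalExcept i v f) = evalExcept i v (pderiv i f) := by
  induction f using MvPolynomial.induction_on with
  | C r => simp [evalExcept, Polynomial.algebraMap_apply]
  | add p q hp hq => simp [hp, hq]
  | mul_X p j hp =>
    rcases eq_or_ne j i with rfl | hj <;> simp_all [evalExcept, derivative_mul] <;> ring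

end

theorem exists_natDegree_evalExcept_ne_zero {R ι : Type*} [CommRing R] [IsDomain R] [Infinite R]
    [DecidableEq ι] {f : MvPolynomial ι R} {i : ι} (h : pderiv i f ≠ 0) :
    ∃ ρ : ι → R, (evalExcept i ρ f).natDegree ≠ 0 := by
  obtain ⟨ρ, hρ⟩ : ∃ ρ, eval ρ (pderiv i f) ≠ 0 := by
    by_contra! hzero
    exact h (MvPolynomial.funext fun ρ => by simp [hzero ρ])
  refine ⟨ρ, fun hdeg => hρ ?_⟩
  have := congrArg (Polynomial.eval (ρ i)) (derivative_of_natDegree_zero hdeg)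
  rwa [derivative_evalExcept, eval_evalExcept, Function.update_eq_self, aeval_eq_eval,
    Polynomial.eval_zero] at this

end MvPolynomial

namespace Complex

theorem le_norm_of_forall_mem_frontier_le_norm {E : Type*} [NormedAddCommGroup E]
    [NormedSpace ℂ E] [Nontrivial E] {f : E → ℂ} {U : Set E} (hU : Bornology.IsBounded U)
    (hf : DiffContOnCl ℂ f U) (h₀ : ∀ z ∈ closure U, f z ≠ 0) {C : ℝ} (hC : 0 < C)
    (hfr : ∀ z ∈ frontier U, C ≤ ‖f z‖) {z : E} (hz : z ∈ closure U) : C ≤ ‖f z‖ := by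
  have hinv : ‖(f z)⁻¹‖ ≤ C⁻¹ :=
    norm_le_of_forall_mem_frontier_norm_le hU (hf.inv h₀) (fun w hw => by
      simpa only [Pi.inv_apply, norm_inv] using inv_anti₀ hC (hfr w hw)) hz
  rw [norm_inv] at hinv
  exact (inv_le_inv₀ (norm_pos_iff.mpr (h₀ z hz)) hC).mp hinv

theorem eventually_exists_zero_of_continuous {α : Type*} [TopologicalSpace α]
    {F : α → ℂ → ℂ} (hF : Continuous (Function.uncurry F)) (hdiff : ∀ a, Differentiable ℂ (F a))
    {a : α} {c : ℂ} {r : ℝ} (hr : 0 < r) (hc : F a c = 0)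
    (hsphere : ∀ z ∈ sphere c r, F a z ≠ 0) :
    ∀ᶠ b in 𝓝 a, ∃ z ∈ closedBall c r, F b z = 0 := by
  obtain ⟨z₀, hz₀, hmin⟩ := (isCompact_sphere c r).exists_isMinOn
    (NormedSpace.sphere_nonempty.mpr hr.le) (hF.uncurry_left a).norm.continuousOn
  set δ := ‖F a z₀‖
  have hδ : 0 < δ := norm_pos_iff.mpr (hsphere z₀ hz₀)
  obtain ⟨v, hv, hclose⟩ := (isCompact_closedBall c r).mem_uniformity_of_prod
    hF.continuousOn (mem_univ a) (dist_mem_uniformity (half_pos hδ))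
  rw [nhdsWithin_univ] at hv
  filter_upwards [hv] with b hb
  by_contra! hzero
  have hfr : ∀ z ∈ frontier (ball c r), δ / 2 ≤ ‖F b z‖ := by
    intro z hz
    rw [frontier_ball c hr.ne'] at hz
    have h₁ : δ ≤ ‖F a z‖ := hmin hz
    have h₂ : dist (F b z) (F a z) < δ / 2 := hclose b hb z (sphere_subset_closedBall hz)
    have h₃ := norm_le_norm_add_norm_sub' (F a z) (F b z)
    rw [dist_eq_norm, norm_sub_rev] at h₂
    linarith
  have hlow := le_norm_of_forall_mem_frontier_le_norm isBounded_ball (hdiff b).diffContOnCl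
    (by rwa [closure_ball c hr.ne']) (half_pos hδ) hfr
    (by rw [closure_ball c hr.ne']; exact mem_closedBall_self hr.le)
  have hup : dist (F b c) (F a c) < δ / 2 := hclose b hb c (mem_closedBall_self hr.le)
  rw [hc, dist_zero_right] at hup
  linarith

end Complex

namespace Polynomial

theorem eval_derivative_ne_zero_of_forall_im_pos {p : ℂ[X]} (hp : 0 < p.degree)
    (hpH : ∀ z : ℂ, 0 < z.im → p.eval z ≠ 0) {z : ℂ} (hz : 0 < z.im) :
    p.derivative.eval z ≠ 0 := by
  have hp0 : p ≠ 0 := ne_zero_of_degree_gt hp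
  have hlower : p.rootSet ℂ ⊆ {w : ℂ | w.im ≤ 0} := fun w hw =>
    not_lt.mp fun hw' => hpH w hw' ((mem_rootSet_of_ne hp0).mp hw)
  intro hz0
  have hmem : z ∈ p.derivative.rootSet ℂ := by
    rw [mem_rootSet_of_ne (derivative_ne_zero.mpr (natDegree_pos_iff_degree_pos.mpr hp).ne')]
    simpa using hz0
  have := convexHull_min hlower (convex_halfSpace_im_le 0)
    (rootSet_derivative_subset_convexHull_rootSet hp hmem)
  exact (not_le.mpr hz) this

theorem continuous_evalEval {R : Type*} [CommSemiring R] [TopologicalSpace R]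
    [IsTopologicalSemiring R] (P : R[X][X]) :
    Continuous fun q : R × R => P.evalEval q.1 q.2 := by
  have h : ∀ q : R × R, P.evalEval q.1 q.2 =
      ∑ k ∈ Finset.range (P.natDegree + 1), (P.coeff k).eval q.1 * q.2 ^ k := fun q => by
    rw [← eval₂_evalRingHom, eval₂_eq_sum_range]
    rfl
  simp only [h]
  fun_prop

theorem exists_forall_mem_sphere_eval_ne_zero {p : ℂ[X]} (hp : p ≠ 0) (c : ℂ) {ε : ℝ}
    (hε : 0 < ε) : ∃ r ∈ Ioo 0 ε, ∀ z ∈ sphere c r, p.eval z ≠ 0 := by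
  obtain ⟨r, hr, hrS⟩ := (Ioo_infinite hε).exists_notMem_finset
    (p.roots.toFinset.image fun z => dist z c)
  refine ⟨r, hr, fun z hz hz0 => hrS ?_⟩
  exact Finset.mem_image.mpr ⟨z, by simpa [hp] using hz0, hz⟩

theorem eval_leadingCoeff_ne_zero_of_forall_evalEval_ne_zero {P : ℂ[X][X]}
    (hP : ∀ᶠ s in 𝓝 0, ∀ y : ℂ, 0 < y.im → P.evalEval s y ≠ 0) :
    P.leadingCoeff.eval 0 ≠ 0 := by
  obtain ⟨ε, hε, hball⟩ := Metric.eventually_nhds_iff.mp hP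
  have hP0 : P ≠ 0 := by
    rintro rfl
    exact hball (by simpa using hε) Complex.I (by simp) (evalEval_zero 0 Complex.I)
  intro hq0
  obtain ⟨r, ⟨hr, hrε⟩, hsphere⟩ :=
    exists_forall_mem_sphere_eval_ne_zero (leadingCoeff_ne_zero.mpr hP0) 0 hε
  -- `P.reverse.evalEval s w = wⁿ * P.evalEval s w⁻¹` for `w ≠ 0`, and at `w = 0` it is `q s`
  set F : ℂ → ℂ → ℂ := fun w s => P.reverse.evalEval s w
  have hF0 : ∀ s, F 0 s = P.leadingCoeff.eval s := fun s => by
    simp [F, evalEval, ← coeff_zero_eq_eval_zero, coeff_zero_reverse]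
  have hF : Continuous (Function.uncurry F) :=
    (continuous_evalEval P.reverse).comp continuous_swap
  obtain ⟨δ, hδ, hzero⟩ := Metric.eventually_nhds_iff.mp
    (Complex.eventually_exists_zero_of_continuous hF
      (fun w => (P.reverse.eval (C w)).differentiable) hr (by rw [hF0]; exact hq0)
      (fun z hz => by rw [hF0]; exact hsphere z hz))
  set y : ℂ := ((2 / δ : ℝ) : ℂ) * Complex.I
  have hy : 0 < y.im := by simp [y, hδ]
  have hy0 : y ≠ 0 := fun h => by simp [h] at hy
  have hny : ‖y‖ = 2 / δ := by simp [y, abs_of_pos hδ]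
  obtain ⟨s, hs, hFs⟩ := hzero (y := y⁻¹) (by
    rw [dist_zero_right, norm_inv, hny, inv_div]
    linarith)
  let _ : Invertible y := invertibleOfNonzero hy0
  refine hball (lt_of_le_of_lt (mem_closedBall.mp hs) hrε) y hy ?_
  rw [← eval₂_evalRingHom, ← eval₂_reverse_eq_zero_iff, invOf_eq_inv, eval₂_evalRingHom]
  exact hFs

end Polynomial

open MvPolynomial (evalExcept eval_evalExcept map_evalExcept aeval_eq_eval)

theorem IsUpper.eval_evalExcept_ne_zero {d : ℕ} {f : MvPolynomial (Fin d) ℂ} (hf : IsUpper f)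
    {i : Fin d} {σ : Fin d → ℂ} (hσ : ∀ j ≠ i, 0 < (σ j).im) {τ : ℂ} (hτ : 0 < τ.im) :
    (evalExcept i σ f).eval τ ≠ 0 := by
  rw [eval_evalExcept, aeval_eq_eval]
  exact hf _ ((Function.forall_update_iff σ fun _ z => 0 < z.im).mpr ⟨hτ, hσ⟩)

theorem IsUpper.natDegree_evalExcept_le {d : ℕ} {f : MvPolynomial (Fin d) ℂ} (hf : IsUpper f)
    (i : Fin d) {σ : Fin d → ℂ} (hσ : ∀ j ≠ i, 0 < (σ j).im) (ρ : Fin d → ℂ) :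
    (evalExcept i ρ f).natDegree ≤ (evalExcept i σ f).natDegree := by
  set P : ℂ[X][X] := evalExcept i (fun j => C (σ j) + X * C (ρ j - σ j)) f
  have hmap (s : ℂ) :
      P.map (evalRingHom s) = evalExcept i (fun j => σ j + s * (ρ j - σ j)) f := by
    rw [← coe_aeval_eq_evalRingHom, map_evalExcept]
    congr
    funext j
    simp
  have hnear : ∀ᶠ s in 𝓝 (0 : ℂ), ∀ j ≠ i, 0 < (σ j + s * (ρ j - σ j)).im :=
    eventually_all.mpr fun j => eventually_imp_distrib_left.mpr fun hj =>
      Filter.Tendsto.eventually_const_lt (by simpa using hσ j hj)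
        ((Complex.continuous_im.comp (by fun_prop)).tendsto' 0 _ rfl)
  have hlead : P.leadingCoeff.eval 0 ≠ 0 := by
    refine eval_leadingCoeff_ne_zero_of_forall_evalEval_ne_zero ?_
    filter_upwards [hnear] with s hs y hy
    rw [← map_evalRingHom_eval, hmap]
    exact hf.eval_evalExcept_ne_zero hs hy
  calc (evalExcept i ρ f).natDegree
    _ = (P.map (evalRingHom 1)).natDegree := by simp [hmap]
    _ ≤ P.natDegree := natDegree_map_le
    _ = (P.map (evalRingHom 0)).natDegree := (natDegree_map_of_leadingCoeff_ne_zero _ hlead).symm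
    _ = (evalExcept i σ f).natDegree := by simp [hmap]

end

/-- Each partial derivative of an upper polynomial is zero or an upper polynomial. -/
theorem pderiv_isUpper_or_zero {d : ℕ} (f : MvPolynomial (Fin d) ℂ)
    (hf : IsUpper f) (i : Fin d) :
    MvPolynomial.pderiv i f = 0 ∨ IsUpper (MvPolynomial.pderiv i f) := by
  by_cases h0 : MvPolynomial.pderiv i f = 0
  · exact Or.inl h0
  refine Or.inr fun σ hσ => ?_
  obtain ⟨ρ, hρ⟩ := MvPolynomial.exists_natDegree_evalExcept_ne_zero h0
  have hdeg : 0 < (MvPolynomial.evalExcept i σ f).degree :=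
    Polynomial.natDegree_pos_iff_degree_pos.mp
      ((Nat.pos_of_ne_zero hρ).trans_le (hf.natDegree_evalExcept_le i (fun j _ => hσ j) ρ))
  have := Polynomial.eval_derivative_ne_zero_of_forall_im_pos hdeg
    (fun τ hτ => hf.eval_evalExcept_ne_zero (fun j _ => hσ j) hτ) (hσ i)
  rwa [MvPolynomial.derivative_evalExcept, MvPolynomial.eval_evalExcept, Function.update_eq_self,
    MvPolynomial.aeval_eq_eval] at this
end

section
/- Suppose f(x₁,…,x_d, y) = Σᵢ fᵢ(x₁,…,x_d)·yⁱ is an upper polynomial in d+1 variables. Then every coefficient fᵢ ∈ ℂ[x₁,…,x_d] is either the zero polynomial or an upper polynomial in d variables. -/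
open Polynomial Filter Complex
open scoped Topology

theorem Polynomial.norm_eval_le_of_eval_ne_zero_on_ball (p : ℂ[X]) {r : ℝ} (hr : 0 < r)
    (hp : ∀ w : ℂ, ‖w‖ < r → p.eval w ≠ 0) (z : ℂ) :
    ‖p.eval z‖ ≤ ‖p.eval 0‖ * (1 + ‖z‖ / r) ^ p.natDegree := by
  have hp0 : p ≠ 0 := by
    rintro rfl
    exact hp 0 (by simpa using hr) eval_zero
  have hroots : ∀ ρ ∈ p.roots, r ≤ ‖ρ‖ := fun ρ hρ =>
    not_lt.mp fun h => hp ρ h ((mem_roots hp0).mp hρ)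
  have hnorm : ∀ w, ‖p.eval w‖ = ‖p.leadingCoeff‖ * (p.roots.map fun ρ => ‖w - ρ‖).prod := by
    intro w
    conv_lhs => rw [(IsAlgClosed.splits p).eq_prod_roots]
    rw [eval_mul, eval_C, eval_multiset_prod, norm_mul, Multiset.map_map]
    exact congrArg _ (map_multiset_prod (normHom : ℂ →*₀ ℝ) _ |>.trans (by simp [Multiset.map_map]))
  rw [hnorm, hnorm, mul_assoc, ← IsAlgClosed.card_roots_eq_natDegree, ← Multiset.prod_replicate,
    ← Multiset.map_const', ← Multiset.prod_map_mul]
  gcongr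
  refine Multiset.prod_map_le_prod_map₀ _ _ (fun _ _ => norm_nonneg _) fun ρ hρ => ?_
  have hρ := hroots ρ hρ
  calc ‖z - ρ‖ ≤ ‖z‖ + ‖ρ‖ := norm_sub_le z ρ
    _ ≤ ‖0 - ρ‖ * (1 + ‖z‖ / r) := by
      rw [zero_sub, norm_neg, mul_add, mul_one, add_comm, mul_div_assoc']
      gcongr
      rw [le_div_iff₀ hr, mul_comm]
      gcongr

theorem Polynomial.natDegree_eval_C_le {R : Type*} [CommSemiring R] (G : R[X][X]) (a : R) :
    (G.eval (C a)).natDegree ≤ G.support.sup fun m => (G.coeff m).natDegree := by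
  rw [eval_eq_sum, sum_def]
  refine natDegree_sum_le_of_forall_le _ _ fun m hm => ?_
  rw [← C_pow]
  exact (natDegree_mul_C_le _ _).trans (Finset.le_sup (f := fun m => (G.coeff m).natDegree) hm)

theorem Polynomial.coeff_zero_eq_zero_of_evalEval_ne_zero (G : ℂ[X][X]) {r : ℝ} (hr : 0 < r)
    (hG : ∀ z : ℂ, ‖z‖ < r → ∀ τ : ℂ, 0 < τ.im → G.evalEval z τ ≠ 0)
    (h0 : (G.coeff 0).eval 0 = 0) : G.coeff 0 = 0 := by
  refine Polynomial.funext fun z => ?_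
  set N := G.support.sup fun m => (G.coeff m).natDegree
  have hbound : ∀ t : ℝ, 0 < t →
      ‖G.evalEval z (I * t)‖ ≤ ‖G.evalEval 0 (I * t)‖ * (1 + ‖z‖ / r) ^ N := by
    intro t ht
    have him : 0 < (I * t).im := by simpa using ht
    refine (norm_eval_le_of_eval_ne_zero_on_ball _ hr (fun w hw => hG w hw _ him) z).trans ?_
    gcongr
    · exact le_add_of_nonneg_right (by positivity)
    · exact natDegree_eval_C_le G _
  have hlim : ∀ w : ℂ,
      Tendsto (fun t : ℝ => G.evalEval w (I * t)) (𝓝[>] 0) (𝓝 ((G.coeff 0).eval w)) := by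
    intro w
    have hc : Continuous fun τ => G.evalEval w τ := by
      simpa only [eval₂_evalRingHom] using Polynomial.continuous_eval₂ G (evalRingHom w)
    have hline : Continuous fun t : ℝ => I * t := by fun_prop
    simpa [Function.comp_def, coeff_zero_eq_eval_zero, evalEval] using
      ((hc.comp hline).tendsto 0).mono_left (nhdsWithin_le_nhds (s := Set.Ioi 0))
  have := le_of_tendsto_of_tendsto (hlim z).norm ((hlim 0).norm.mul_const _)
    (eventually_nhdsWithin_of_forall hbound)
  simpa [h0] using this

theorem MvPolynomial.eval_aeval_C_add_X_mul_C {R ι : Type*} [CommRing R] (a v : ι → R) (z : R)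
    (g : MvPolynomial ι R) :
    (aeval (fun i => Polynomial.C (a i) + Polynomial.X * Polynomial.C (v i)) g).eval z =
      eval (a + z • v) g := by
  rw [← Polynomial.coe_aeval_eq_eval, ← AlgHom.comp_apply, comp_aeval, ← coe_aeval_eq_eval]
  have hpt : (fun i => Polynomial.aeval z (Polynomial.C (a i) + Polynomial.X * Polynomial.C (v i)))
      = a + z • v := by
    ext i
    simp only [map_add, map_mul, Polynomial.aeval_C, Polynomial.aeval_X, Pi.add_apply,
      Pi.smul_apply, smul_eq_mul, Algebra.algebraMap_self, RingHom.id_apply]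
  rw [hpt]
  rfl

theorem Polynomial.eval_derivative_ne_zero_of_im_pos {p : ℂ[X]} (hp : 0 < p.natDegree)
    (h : ∀ z : ℂ, 0 < z.im → p.eval z ≠ 0) {z : ℂ} (hz : 0 < z.im) :
    p.derivative.eval z ≠ 0 := by
  intro hz0
  have hroots : p.rootSet ℂ ⊆ {w : ℂ | w.im ≤ 0} := fun w hw =>
    not_lt.mp fun hw' => h w hw' (by simpa using (mem_rootSet.mp hw).2)
  have hmem : z ∈ p.derivative.rootSet ℂ :=
    mem_rootSet.mpr ⟨derivative_ne_zero.mpr hp.ne', by simpa using hz0⟩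
  have := convexHull_min hroots (convex_halfSpace_le Complex.imLm.isLinear 0)
    (rootSet_derivative_subset_convexHull_rootSet (natDegree_pos_iff_degree_pos.mp hp) hmem)
  exact not_le.mpr hz this

theorem isUpper_mul_iff {d : ℕ} {p q : MvPolynomial (Fin d) ℂ} :
    IsUpper (p * q) ↔ IsUpper p ∧ IsUpper q := by
  simp only [IsUpper, map_mul]
  exact ⟨fun h => ⟨fun σ hσ => left_ne_zero_of_mul (h σ hσ),
    fun σ hσ => right_ne_zero_of_mul (h σ hσ)⟩, fun h σ hσ => mul_ne_zero (h.1 σ hσ) (h.2 σ hσ)⟩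

namespace IsUpperY

variable {d : ℕ} {f : (MvPolynomial (Fin d) ℂ)[X]}

theorem coeff_zero_eq_zero_or_isUpper (hf : IsUpperY f) : f.coeff 0 = 0 ∨ IsUpper (f.coeff 0) := by
  refine or_iff_not_imp_right.mpr fun hnot => ?_
  obtain ⟨σ₀, hσ₀, hvan⟩ : ∃ σ₀ : Fin d → ℂ, (∀ i, 0 < (σ₀ i).im) ∧
      MvPolynomial.eval σ₀ (f.coeff 0) = 0 := by
    simpa [IsUpper] using hnot
  have hU : IsOpen (Set.univ.pi fun _ : Fin d => {z : ℂ | 0 < z.im}) :=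
    isOpen_set_pi Set.finite_univ fun _ _ => isOpen_lt continuous_const continuous_im
  obtain ⟨ε, hε, hball⟩ := Metric.isOpen_iff.mp hU σ₀ (by simpa using hσ₀)
  refine MvPolynomial.funext_set (fun i => Metric.ball (σ₀ i) (ε / 2))
    (fun i => infinite_of_mem_nhds _ (Metric.ball_mem_nhds _ (by positivity))) fun σ hσ => ?_
  rw [← ball_pi _ (by positivity), mem_ball_iff_norm] at hσ
  set G : ℂ[X][X] :=
    f.map (MvPolynomial.aeval fun i => C (σ₀ i) + X * C ((σ - σ₀) i)).toRingHom
  have hG : ∀ z τ, G.evalEval z τ = f.eval₂ (MvPolynomial.eval (σ₀ + z • (σ - σ₀))) τ := by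
    intro z τ
    rw [← eval₂_evalRingHom, eval₂_map]
    congr 1
    exact RingHom.ext fun g => MvPolynomial.eval_aeval_C_add_X_mul_C _ _ z g
  have hG0 : ∀ z, (G.coeff 0).eval z = MvPolynomial.eval (σ₀ + z • (σ - σ₀)) (f.coeff 0) :=
    fun z => by rw [coeff_map]; exact MvPolynomial.eval_aeval_C_add_X_mul_C _ _ z _
  have hline : ∀ z : ℂ, ‖z‖ < 2 → ∀ i, 0 < ((σ₀ + z • (σ - σ₀)) i).im := by
    intro z hz
    refine Set.mem_univ_pi.mp (hball ?_)
    rw [mem_ball_iff_norm, add_sub_cancel_left, norm_smul]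
    calc ‖z‖ * ‖σ - σ₀‖ < 2 * (ε / 2) := by gcongr
      _ = ε := by ring
  have hzero := G.coeff_zero_eq_zero_of_evalEval_ne_zero two_pos
    (fun z hz τ hτ => by rw [hG]; exact hf _ τ (hline z hz) hτ) (by simpa [hG0] using hvan)
  simpa [hG0] using congrArg (eval 1) hzero

theorem ne_zero (hf : IsUpperY f) : f ≠ 0 := by
  rintro rfl
  exact hf (fun _ => I) I (fun _ => by simp) (by simp) (eval₂_zero _ _)

theorem reverse_comp_neg_X (hf : IsUpperY f) : IsUpperY (f.comp (-X)).reverse := by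
  intro σ τ hσ hτ
  have hτ0 : τ ≠ 0 := by
    rintro rfl
    simp at hτ
  let := invertibleOfNonzero (inv_ne_zero hτ0)
  rw [show τ = ⅟τ⁻¹ by simp, ne_eq, eval₂_reverse_eq_zero_iff, eval₂_comp]
  refine hf σ _ hσ ?_
  simpa [Complex.inv_im, neg_div] using div_pos hτ (normSq_pos.mpr hτ0)

theorem isUpper_leadingCoeff (hf : IsUpperY f) : IsUpper f.leadingCoeff := by
  have h := hf.reverse_comp_neg_X.coeff_zero_eq_zero_or_isUpper
  rw [coeff_zero_reverse, comp_neg_X_leadingCoeff_eq] at h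
  have hne : (-1) ^ f.natDegree * f.leadingCoeff ≠ 0 :=
    mul_ne_zero (by simp) (leadingCoeff_ne_zero.mpr hf.ne_zero)
  exact (isUpper_mul_iff.mp (h.resolve_left hne)).2

theorem derivative (hf : IsUpperY f) (hdeg : f.natDegree ≠ 0) : IsUpperY (derivative f) := by
  intro σ τ hσ hτ
  rw [eval₂_eq_eval_map, ← derivative_map]
  refine eval_derivative_ne_zero_of_im_pos ?_
    (fun z hz => by rw [← eval₂_eq_eval_map]; exact hf σ z hσ hz) hτ
  rw [natDegree_map_of_leadingCoeff_ne_zero _ (hf.isUpper_leadingCoeff σ hσ)]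
  exact Nat.pos_of_ne_zero hdeg

end IsUpperY

/-- Every coefficient (in the distinguished variable `y`) of an upper polynomial
in `d+1` variables is zero or an upper polynomial in `d` variables. -/
theorem coeff_isUpper_or_zero {d : ℕ} (f : Polynomial (MvPolynomial (Fin d) ℂ))
    (hf : IsUpperY f) (i : ℕ) :
    f.coeff i = 0 ∨ IsUpper (f.coeff i) := by
  induction i generalizing f with
  | zero => exact hf.coeff_zero_eq_zero_or_isUpper
  | succ k ih =>
    by_cases hdeg : f.natDegree = 0
    · exact Or.inl (coeff_eq_zero_of_natDegree_lt (by omega))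
    have hk : (k + 1 : MvPolynomial (Fin d) ℂ) ≠ 0 := Nat.cast_add_one_ne_zero k
    rcases ih _ (hf.derivative hdeg) with h | h
    · rw [coeff_derivative] at h
      exact Or.inl ((mul_eq_zero.mp h).resolve_right hk)
    · rw [coeff_derivative] at h
      exact Or.inr (isUpper_mul_iff.mp h).1
end

section
/- If f ∈ ℂ[x₁,…,x_d] is an upper polynomial, then f interlaces each of its partial derivatives: for each i, the polynomial f + y·(∂f/∂xᵢ) is an upper polynomial in d+1 variables (y a new variable). -/
/-!
Fix `σ` in the upper half plane and restrict `f` to the line `xᵢ = t`, other coordinates frozen at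
`σ`. The restriction `p` has no zeros in the upper half plane, so all its roots `r` satisfy
`Im r ≤ 0`, and `p'/p = ∑ 1/(z - r)` has `Im ≤ 0` there. A zero of `p + τ p'` at `z = σᵢ` would
instead give `p'/p = -1/τ`, whose imaginary part is positive.
-/

namespace Polynomial

theorem im_eval_derivative_div_eval_nonpos {p : ℂ[X]}
    (hp : ∀ z : ℂ, 0 < z.im → p.eval z ≠ 0) {z : ℂ} (hz : 0 < z.im) :
    (p.derivative.eval z / p.eval z).im ≤ 0 := by
  rw [(IsAlgClosed.splits p).eval_derivative_div_eval_of_ne_zero (hp z hz)]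
  refine Multiset.sum_induction (fun w : ℂ => w.im ≤ 0) _ (fun a b ha hb => ?_) (by simp) ?_
  · rw [Complex.add_im]; linarith
  · simp only [Multiset.mem_map]
    rintro _ ⟨r, hr, rfl⟩
    have hr_im : r.im ≤ 0 := by
      by_contra! h
      exact hp r h ((mem_roots'.mp hr).2)
    rw [one_div, Complex.inv_im, Complex.sub_im]
    exact div_nonpos_of_nonpos_of_nonneg (by linarith) (Complex.normSq_nonneg _)

theorem eval_add_mul_eval_derivative_ne_zero {p : ℂ[X]}
    (hp : ∀ z : ℂ, 0 < z.im → p.eval z ≠ 0) {z τ : ℂ} (hz : 0 < z.im) (hτ : 0 < τ.im) :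
    p.eval z + τ * p.derivative.eval z ≠ 0 := by
  intro h
  have hτ0 : τ ≠ 0 := by rintro rfl; simp at hτ
  have hratio : p.derivative.eval z / p.eval z = -τ⁻¹ := by
    rw [div_eq_iff (hp z hz)]
    field_simp
    linear_combination h
  have hneg_inv_im : 0 < (-τ⁻¹).im := by
    rw [Complex.neg_im, Complex.inv_im, neg_div, neg_neg]
    exact div_pos hτ (Complex.normSq_pos.mpr hτ0)
  have := im_eval_derivative_div_eval_nonpos hp hz
  rw [hratio] at this
  linarith

end Polynomial

namespace MvPolynomial

variable {R σ : Type*} [CommRing R] [DecidableEq σ]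

theorem eval_aeval_update_C_X (x : σ → R) (i : σ) (t : R) (f : MvPolynomial σ R) :
    (aeval (Function.update (fun j => Polynomial.C (x j)) i Polynomial.X) f).eval t =
      eval (Function.update x i t) f := by
  rw [← Polynomial.coe_aeval_eq_eval, ← AlgHom.comp_apply, comp_aeval,
    ← Function.comp_def, Function.comp_update]
  simp [Function.comp_def]

theorem derivative_aeval_update_C_X (x : σ → R) (i : σ) (f : MvPolynomial σ R) :
    Polynomial.derivative (aeval (Function.update (fun j => Polynomial.C (x j)) i Polynomial.X) f) =
      aeval (Function.update (fun j => Polynomial.C (x j)) i Polynomial.X) (pderiv i f) := by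
  induction f using MvPolynomial.induction_on with
  | C a => simp
  | add p q hp hq => simp only [map_add, hp, hq]
  | mul_X p j hp =>
    by_cases hj : j = i
    · subst hj; simp [hp, Derivation.leibniz, mul_comm]
    · simp [hp, hj, Derivation.leibniz, pderiv_X_of_ne hj, mul_comm]

end MvPolynomial

/-- An upper polynomial interlaces each of its partial derivatives:
`f + y·(∂f/∂xᵢ) ∈ U_{d+1}`. -/
theorem isUpper_interlaces_pderiv {d : ℕ} (f : MvPolynomial (Fin d) ℂ)
    (hf : IsUpper f) (i : Fin d) :
    IsUpperY (Polynomial.C f + Polynomial.X * Polynomial.C (MvPolynomial.pderiv i f)) := by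
  intro σ τ hσ hτ
  set p := MvPolynomial.aeval (Function.update (fun j => Polynomial.C (σ j)) i Polynomial.X) f
  have hp : ∀ z : ℂ, 0 < z.im → p.eval z ≠ 0 := fun z hz => by
    rw [MvPolynomial.eval_aeval_update_C_X]
    exact hf _ ((Function.forall_update_iff σ fun _ w => 0 < w.im).2 ⟨hz, fun j _ => hσ j⟩)
  have := p.eval_add_mul_eval_derivative_ne_zero hp (hσ i) hτ
  rw [MvPolynomial.derivative_aeval_update_C_X, MvPolynomial.eval_aeval_update_C_X,
    MvPolynomial.eval_aeval_update_C_X, Function.update_eq_self] at this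
  rw [Polynomial.eval₂_add, Polynomial.eval₂_mul, Polynomial.eval₂_C, Polynomial.eval₂_X,
    Polynomial.eval₂_C]
  exact fun h => this (by linear_combination h)
end

section
/- Let f ∈ ℂ[x₁,…,x_d] be an upper polynomial of total degree n. Then its leading form f^H, the sum of all terms of f of total degree n, is again an upper polynomial (and it is homogeneous of degree n). -/
/-!
For `s > 0` the polynomial `x ↦ sⁿ f(x / s)` has no zeros in the product of upper half planes,
and as `s → 0⁺` it converges to `f^H`: it is the homogenization `∑ₖ s^(n-k) fₖ` of `f`, evaluated
at `s`. By Hurwitz's theorem the limit is then zero-free there or identically zero, and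
`f^H ≠ 0`. Hurwitz's theorem is reduced to one variable by restricting to a line; there, if all
roots of `q` stay at distance `≥ ε` from `z`, the factorisation of `q` over its roots gives
`(ε / (ε + ‖w - z‖))^deg q · ‖q w‖ ≤ ‖q z‖`, an inequality that survives the limit.
-/

open Filter
open scoped Topology

namespace Polynomial

variable {K : Type*} [NormedField K] [IsAlgClosed K]

theorem pow_mul_norm_eval_le_of_forall_roots {q : K[X]} {D : ℕ} (hD : q.natDegree ≤ D)
    {δ : ℝ} (hδ₀ : 0 ≤ δ) (hδ₁ : δ ≤ 1) {z w : K}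
    (h : ∀ r ∈ q.roots, δ * ‖z - r‖ ≤ ‖w - r‖) :
    δ ^ D * ‖q.eval z‖ ≤ ‖q.eval w‖ := by
  have hq := IsAlgClosed.splits q
  have norm_eval (t : K) :
      ‖q.eval t‖ = ‖q.leadingCoeff‖ * (q.roots.map fun r => ‖t - r‖).prod := by
    rw [hq.eval_eq_prod_roots, norm_mul, ← normHom_apply (Multiset.prod _), map_multiset_prod,
      Multiset.map_map]
    rfl
  calc δ ^ D * ‖q.eval z‖
      ≤ δ ^ Multiset.card q.roots * ‖q.eval z‖ :=
        mul_le_mul_of_nonneg_right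
          (pow_le_pow_of_le_one hδ₀ hδ₁ (hq.natDegree_eq_card_roots ▸ hD)) (norm_nonneg _)
    _ = ‖q.leadingCoeff‖ * (q.roots.map fun r => δ * ‖z - r‖).prod := by
        rw [norm_eval, Multiset.prod_map_mul, Multiset.map_const', Multiset.prod_replicate]
        ring
    _ ≤ ‖q.leadingCoeff‖ * (q.roots.map fun r => ‖w - r‖).prod := by
        gcongr
        exact Multiset.prod_map_le_prod_map₀ _ _ (fun r _ => by positivity) h
    _ = ‖q.eval w‖ := (norm_eval w).symm

/-- Hurwitz's theorem for polynomials of bounded degree. -/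
theorem eq_zero_of_tendsto_of_eval_eq_zero {α : Type*} {l : Filter α} [l.NeBot]
    {q : α → K[X]} {p : K[X]} {D : ℕ} (hD : ∀ i, (q i).natDegree ≤ D) {z : K} {ε : ℝ}
    (hε : 0 < ε) (hroots : ∀ᶠ i in l, ∀ r ∈ (q i).roots, ε ≤ ‖z - r‖)
    (hlim : ∀ t, Tendsto (fun i => (q i).eval t) l (𝓝 (p.eval t))) (hpz : p.eval z = 0) :
    p = 0 := by
  refine Polynomial.funext fun w => ?_
  set δ := ε / (ε + ‖w - z‖)
  have hδ₀ : 0 < δ := by positivity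
  have hδ₁ : δ ≤ 1 := div_le_one_of_le₀ (by simp) (by positivity)
  have hbound : ∀ᶠ i in l, δ ^ D * ‖(q i).eval w‖ ≤ ‖(q i).eval z‖ := by
    filter_upwards [hroots] with i hi
    refine pow_mul_norm_eval_le_of_forall_roots (hD i) hδ₀.le hδ₁ fun r hr => ?_
    have hwr : ‖w - r‖ ≤ ‖w - z‖ + ‖z - r‖ := norm_sub_le_norm_sub_add_norm_sub w z r
    rw [div_mul_eq_mul_div, div_le_iff₀ (by positivity)]
    nlinarith [hi r hr, norm_nonneg (w - z)]
  have hle : δ ^ D * ‖p.eval w‖ ≤ ‖p.eval z‖ :=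
    le_of_tendsto_of_tendsto ((hlim w).norm.const_mul _) (hlim z).norm hbound
  rw [hpz, norm_zero] at hle
  simpa [hδ₀.ne'] using le_antisymm hle (by positivity)

end Polynomial

namespace MvPolynomial

variable {σ R : Type*} [CommSemiring R]

theorem natDegree_aeval_le_totalDegree {u : σ → Polynomial R} (hu : ∀ j, (u j).natDegree ≤ 1)
    (g : MvPolynomial σ R) : (aeval u g).natDegree ≤ g.totalDegree := by
  rw [aeval_eq_eval₂Hom, coe_eval₂Hom, eval₂_eq, Polynomial.algebraMap_eq]
  refine Polynomial.natDegree_sum_le_of_forall_le _ _ fun m hm => ?_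
  calc (Polynomial.C (coeff m g) * ∏ j ∈ m.support, u j ^ m j).natDegree
      ≤ ∑ j ∈ m.support, (u j ^ m j).natDegree :=
        (Polynomial.natDegree_C_mul_le _ _).trans (Polynomial.natDegree_prod_le _ _)
    _ ≤ ∑ j ∈ m.support, m j := Finset.sum_le_sum fun j _ =>
        (Polynomial.natDegree_pow_le_of_le _ (hu j)).trans_eq (mul_one _)
    _ ≤ g.totalDegree := le_totalDegree hm

theorem polynomial_eval_aeval_s9 (u : σ → Polynomial R) (g : MvPolynomial σ R) (t : R) :
    (aeval u g).eval t = eval (fun j => (u j).eval t) g := by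
  simpa only [Polynomial.coe_aeval_eq_eval, aeval_eq_eval] using
    comp_aeval_apply u (Polynomial.aeval t) g

theorem IsHomogeneous.eval_smul {φ : MvPolynomial σ R} {n : ℕ} (hφ : φ.IsHomogeneous n)
    (c : R) (x : σ → R) : eval (c • x) φ = c ^ n * eval x φ := by
  rw [eval_eq, eval_eq, Finset.mul_sum]
  refine Finset.sum_congr rfl fun m hm => ?_
  simp only [Pi.smul_apply, smul_eq_mul, mul_pow, Finset.prod_mul_distrib,
    Finset.prod_pow_eq_pow_sum, ← hφ.degree_eq_sum_deg_support hm]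
  ring

theorem homogeneousComponent_totalDegree_ne_zero {f : MvPolynomial σ R} (hf : f ≠ 0) :
    homogeneousComponent f.totalDegree f ≠ 0 := by
  obtain ⟨m, hm, hmax⟩ := Finset.exists_mem_eq_sup f.support (support_nonempty.mpr hf)
    fun m => m.sum fun _ e => e
  have hdeg : m.degree = f.totalDegree := hmax.symm
  intro h
  have hcoeff := congrArg (coeff m) h
  rw [coeff_homogeneousComponent, if_pos hdeg, coeff_zero] at hcoeff
  exact mem_support_iff.mp hm hcoeff

section Field

variable {K : Type*} [Field K]

/-- The homogenization `∑ₖ yⁿ⁻ᵏ fₖ` of `f` (with `n = totalDegree f`), evaluated at `y = c`. -/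
noncomputable def homogenizationAt (f : MvPolynomial σ K) (c : K) : MvPolynomial σ K :=
  ∑ k ∈ Finset.range (f.totalDegree + 1), c ^ (f.totalDegree - k) • homogeneousComponent k f

variable (f : MvPolynomial σ K)

theorem eval_homogenizationAt (x : σ → K) (c : K) :
    eval x (homogenizationAt f c) =
      ∑ k ∈ Finset.range (f.totalDegree + 1),
        c ^ (f.totalDegree - k) * eval x (homogeneousComponent k f) := by
  simp only [homogenizationAt, map_sum, smul_eval]

theorem totalDegree_homogenizationAt_le (c : K) :
    (homogenizationAt f c).totalDegree ≤ f.totalDegree :=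
  (totalDegree_finsetSum _ _).trans <| Finset.sup_le fun k hk =>
    (totalDegree_smul_le _ _).trans <| (homogeneousComponent_isHomogeneous k f).totalDegree_le.trans
      (Nat.lt_succ_iff.mp (Finset.mem_range.mp hk))

theorem homogenizationAt_zero :
    homogenizationAt f 0 = homogeneousComponent f.totalDegree f := by
  rw [homogenizationAt, Finset.sum_eq_single_of_mem _ (Finset.self_mem_range_succ _), Nat.sub_self,
    pow_zero, one_smul]
  intro k hk hkn
  rw [zero_pow (by grind), zero_smul]

theorem eval_homogenizationAt_of_ne_zero (x : σ → K) {c : K} (hc : c ≠ 0) :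
    eval x (homogenizationAt f c) = c ^ f.totalDegree * eval (c⁻¹ • x) f := by
  rw [← congrArg (eval _) (sum_homogeneousComponent f), eval_homogenizationAt, map_sum,
    Finset.mul_sum]
  refine Finset.sum_congr rfl fun k hk => ?_
  rw [(homogeneousComponent_isHomogeneous k f).eval_smul, ← mul_assoc, inv_pow,
    pow_sub₀ _ hc (Nat.lt_succ_iff.mp (Finset.mem_range.mp hk))]

theorem continuous_eval_homogenizationAt [TopologicalSpace K] [IsTopologicalRing K] (x : σ → K) :
    Continuous fun c => eval x (homogenizationAt f c) := by
  simp only [eval_homogenizationAt]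
  fun_prop

end Field

variable {K : Type*} [NormedField K] [IsAlgClosed K]

theorem eq_zero_of_tendsto_of_eval_eq_zero {α : Type*} {l : Filter α} [l.NeBot]
    {g : α → MvPolynomial σ K} {p : MvPolynomial σ K} {n : ℕ} (hn : ∀ i, (g i).totalDegree ≤ n)
    {Ω : Set (σ → K)} (hΩ : IsOpen Ω) (hg : ∀ᶠ i in l, ∀ x ∈ Ω, eval x (g i) ≠ 0)
    (hlim : ∀ x, Tendsto (fun i => eval x (g i)) l (𝓝 (eval x p)))
    {z : σ → K} (hz : z ∈ Ω) (hpz : eval z p = 0) : p = 0 := by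
  refine funext fun a => ?_
  let u : σ → Polynomial K := fun j => .C (a j - z j) * .X + .C (z j)
  let line : K → σ → K := fun t j => z j + t * (a j - z j)
  have eval_u (t : K) : (fun j => (u j).eval t) = line t := by
    ext j; simp only [u, line, Polynomial.eval_add, Polynomial.eval_mul, Polynomial.eval_C,
      Polynomial.eval_X]; ring
  obtain ⟨ε, hε, hball⟩ := Metric.isOpen_iff.mp (hΩ.preimage (by fun_prop : Continuous line)) 0
    (by simpa [line] using hz)
  have hdeg (i : α) : (aeval u (g i)).natDegree ≤ n :=
    (natDegree_aeval_le_totalDegree (fun _ => Polynomial.natDegree_linear_le) (g i)).trans (hn i)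
  have hroots : ∀ᶠ i in l, ∀ r ∈ (aeval u (g i)).roots, ε ≤ ‖0 - r‖ := by
    filter_upwards [hg] with i hi r hr
    by_contra! hrε
    refine hi (line r) (hball (by simpa using hrε)) ?_
    rw [← eval_u, ← polynomial_eval_aeval_s9]
    exact Polynomial.isRoot_of_mem_roots hr
  have hlim' (t : K) :
      Tendsto (fun i => (aeval u (g i)).eval t) l (𝓝 ((aeval u p).eval t)) := by
    simpa only [polynomial_eval_aeval_s9, eval_u] using hlim (line t)
  have hzero : aeval u p = 0 :=
    Polynomial.eq_zero_of_tendsto_of_eval_eq_zero hdeg hε hroots hlim'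
      (by simpa [polynomial_eval_aeval_s9, eval_u, line] using hpz)
  simpa [polynomial_eval_aeval_s9, eval_u, line] using congrArg (Polynomial.eval 1) hzero

end MvPolynomial

open MvPolynomial

theorem isOpen_setOf_forall_im_pos {ι : Type*} [Finite ι] :
    IsOpen {x : ι → ℂ | ∀ i, 0 < (x i).im} := by
  simp only [Set.ofPred_forall]
  exact isOpen_iInter_of_finite fun i =>
    isOpen_lt continuous_const (Complex.continuous_im.comp (continuous_apply i))

/-- The leading form `f^H` (sum of the terms of top total degree) of an upper
polynomial is again an upper polynomial, and it is homogeneous. -/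
theorem leadingForm_isUpper {d : ℕ} (f : MvPolynomial (Fin d) ℂ) (hf : IsUpper f) :
    IsUpper (MvPolynomial.homogeneousComponent f.totalDegree f) ∧
      (MvPolynomial.homogeneousComponent f.totalDegree f).IsHomogeneous f.totalDegree := by
  refine ⟨fun z hz hHz => ?_, homogeneousComponent_isHomogeneous _ _⟩
  have hf0 : f ≠ 0 := by
    rintro rfl
    exact hf (fun _ => Complex.I) (fun _ => by simp) (map_zero _)
  have hzero_free : ∀ᶠ s : ℝ in 𝓝[>] 0, ∀ x ∈ {x : Fin d → ℂ | ∀ i, 0 < (x i).im},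
      eval x (homogenizationAt f (s : ℂ)) ≠ 0 := by
    filter_upwards [self_mem_nhdsWithin] with s (hs : 0 < s) x hx
    have hs' : (s : ℂ) ≠ 0 := Complex.ofReal_ne_zero.mpr hs.ne'
    rw [eval_homogenizationAt_of_ne_zero f x hs']
    refine mul_ne_zero (pow_ne_zero _ hs') (hf _ fun i => ?_)
    simpa [← Complex.ofReal_inv] using mul_pos (inv_pos.mpr hs) (hx i)
  have hlim (x : Fin d → ℂ) : Tendsto (fun s : ℝ => eval x (homogenizationAt f (s : ℂ)))
      (𝓝[>] 0) (𝓝 (eval x (homogenizationAt f 0))) := by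
    simpa only [Function.comp_def, Complex.ofReal_zero] using
      (((continuous_eval_homogenizationAt f x).comp Complex.continuous_ofReal).tendsto 0).mono_left
        nhdsWithin_le_nhds
  rw [← homogenizationAt_zero] at hHz
  refine homogeneousComponent_totalDegree_ne_zero hf0 ?_
  rw [← homogenizationAt_zero]
  exact eq_zero_of_tendsto_of_eval_eq_zero (fun _ => totalDegree_homogenizationAt_le f _)
    isOpen_setOf_forall_im_pos hzero_free hlim hz hHz
end

section
/- A polynomial f ∈ ℂ[x₁,…,x_d] is an upper polynomial if and only if for every vector a ∈ ℝ^d and every vector b ∈ ℝ^d with all coordinates positive, the univariate polynomial x ↦ f(a₁ + x·b₁, …, a_d + x·b_d) is a (nonzero) polynomial with no roots in the open upper half plane. -/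
/-!
A point `a + z • b` with `a, b` real and `b > 0` coordinatewise lies in the open upper half
plane in every coordinate exactly when `z` does, and every point `σ` of that product of half
planes is of this form, with `a = Re σ`, `b = Im σ` and `z = i`. So restricting `f` to such
complex lines sees exactly the values of `f` on the product of upper half planes.
-/

open scoped Polynomial

theorem MvPolynomial.eval_aeval_polynomial {R σ : Type*} [CommSemiring R]
    (g : σ → R[X]) (z : R) (p : MvPolynomial σ R) :
    (aeval g p).eval z = eval (fun i => (g i).eval z) p := by
  rw [← Polynomial.coe_evalRingHom, map_aeval]
  congr 1
  ext <;> simp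

theorem MvPolynomial.eval_aeval_line {σ : Type*} (f : MvPolynomial σ ℂ) (a b : σ → ℝ) (z : ℂ) :
    (aeval (fun i => Polynomial.C (a i : ℂ) + Polynomial.C (b i : ℂ) * Polynomial.X) f).eval z =
      eval (fun i => a i + b i * z) f := by
  simp [eval_aeval_polynomial]

/-- `f ∈ U_d` iff for all `a ∈ ℝ^d` and `b ∈ ℝ^d` with positive coordinates, the
univariate polynomial `x ↦ f(a + x·b)` is nonzero and has no roots in the open
upper half plane. -/
theorem isUpper_iff_lines {d : ℕ} (f : MvPolynomial (Fin d) ℂ) :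
    IsUpper f ↔
      ∀ a b : Fin d → ℝ, (∀ i, 0 < b i) →
        (MvPolynomial.aeval
            (fun i => Polynomial.C ((a i : ℂ)) + Polynomial.C ((b i : ℂ)) * Polynomial.X) f ≠ 0 ∧
          ∀ z : ℂ, 0 < z.im →
            Polynomial.eval z (MvPolynomial.aeval
              (fun i => Polynomial.C ((a i : ℂ)) + Polynomial.C ((b i : ℂ)) * Polynomial.X) f) ≠ 0) := by
  constructor
  · intro hf a b hb
    have hroots : ∀ z : ℂ, 0 < z.im →
        (MvPolynomial.aeval
          (fun i => Polynomial.C (a i : ℂ) + Polynomial.C (b i : ℂ) * Polynomial.X) f).eval z ≠ 0 := by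
      intro z hz
      rw [MvPolynomial.eval_aeval_line]
      exact hf _ fun i => by simpa using mul_pos (hb i) hz
    exact ⟨fun h0 => hroots Complex.I (by simp) (by rw [h0, Polynomial.eval_zero]), hroots⟩
  · intro h σ hσ
    simpa [MvPolynomial.eval_aeval_line, Complex.re_add_im] using
      (h (fun i => (σ i).re) (fun i => (σ i).im) hσ).2 Complex.I (by simp)
end

section
/- Let f, g ∈ ℂ[x₁,…,x_d] be upper polynomials such that f interlaces g and g interlaces f, i.e. both f + y·g ∈ U_{d+1} and g + y·f ∈ U_{d+1}. Then f and g are constant multiples of one another: there exists a nonzero complex constant c with g = c·f. -/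
/-!
At every point `σ` of the upper polydisc, `f + y g` and `g + y f` have no root `y` in the upper
half plane, so both `g(σ)/f(σ)` and its inverse lie in the closed lower half plane; hence the
ratio `g/f` is real there. A holomorphic function with real values on a connected open set is
constant by the open mapping theorem, so `g/f` is a constant `c` on the polydisc, and `g - c f`,
vanishing on a product of infinite sets, is zero.
-/

namespace Complex

lemma im_div_nonpos_of_add_mul_ne_zero {a b : ℂ} (h : ∀ τ : ℂ, 0 < τ.im → a + τ * b ≠ 0) :
    (b / a).im ≤ 0 := by
  by_contra! hpos
  have hw : b / a ≠ 0 := fun h0 => by simp [h0] at hpos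
  have hb : b ≠ 0 := fun h0 => hw (by simp [h0])
  refine h (-(a / b)) ?_ (by field_simp; ring)
  rw [neg_im, ← inv_div, inv_im, neg_div, neg_neg]
  exact div_pos hpos (normSq_pos.mpr hw)

lemma im_div_eq_zero_of_add_mul_ne_zero {a b : ℂ}
    (hab : ∀ τ : ℂ, 0 < τ.im → a + τ * b ≠ 0) (hba : ∀ τ : ℂ, 0 < τ.im → b + τ * a ≠ 0) :
    (b / a).im = 0 := by
  have hle := im_div_nonpos_of_add_mul_ne_zero hab
  have hinv := im_div_nonpos_of_add_mul_ne_zero hba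
  rw [← inv_div, inv_im, neg_div, neg_nonpos] at hinv
  refine le_antisymm hle (not_lt.1 fun hneg => ?_)
  have hw : b / a ≠ 0 := fun h0 => by simp [h0] at hneg
  exact (div_neg_of_neg_of_pos hneg (normSq_pos.mpr hw)).not_ge hinv

lemma infinite_setOf_im_pos : {z : ℂ | 0 < z.im}.Infinite :=
  infinite_of_mem_nhds I ((isOpen_lt continuous_const continuous_im).mem_nhds (by simp))

end Complex

lemma AnalyticOnNhd.eq_of_im_eq_zero {E : Type*} [NormedAddCommGroup E] [NormedSpace ℂ E]
    {g : E → ℂ} {U : Set E} (hg : AnalyticOnNhd ℂ g U) (hUo : IsOpen U) (hU : IsPreconnected U)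
    (him : ∀ z ∈ U, (g z).im = 0) {x y : E} (hx : x ∈ U) (hy : y ∈ U) : g x = g y := by
  rcases hg.is_constant_or_isOpen hU with ⟨w, hw⟩ | hopen
  · rw [hw x hx, hw y hy]
  · -- the open set `g '' U` would lie in the real line
    have hsub : g '' U ⊆ interior {z : ℂ | z.im ≤ 0} :=
      interior_maximal (by rintro _ ⟨z, hz, rfl⟩; exact (him z hz).le) (hopen U subset_rfl hUo)
    rw [Complex.interior_setOfPred_im_le] at hsub
    exact absurd (him x hx) (hsub ⟨x, hx, rfl⟩ : (g x).im < 0).ne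

def upperPolydisc (ι : Type*) : Set (ι → ℂ) := {σ | ∀ i, 0 < (σ i).im}

section upperPolydisc

variable {ι : Type*}

lemma upperPolydisc_eq_pi : upperPolydisc ι = Set.univ.pi fun _ => {z : ℂ | 0 < z.im} := by
  ext σ
  simp [upperPolydisc]

lemma isOpen_upperPolydisc [Finite ι] : IsOpen (upperPolydisc ι) := by
  rw [upperPolydisc_eq_pi]
  exact isOpen_set_pi Set.finite_univ fun _ _ => isOpen_lt continuous_const Complex.continuous_im

lemma convex_upperPolydisc : Convex ℝ (upperPolydisc ι) := by
  rw [upperPolydisc_eq_pi]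
  exact convex_pi fun _ _ => convex_halfSpace_im_gt 0

open MvPolynomial

variable {f g : MvPolynomial ι ℂ}

lemma eval_div_eq_of_im_eq_zero [Fintype ι] (hf : ∀ σ ∈ upperPolydisc ι, eval σ f ≠ 0)
    (him : ∀ σ ∈ upperPolydisc ι, (eval σ g / eval σ f).im = 0) {σ σ' : ι → ℂ}
    (hσ : σ ∈ upperPolydisc ι) (hσ' : σ' ∈ upperPolydisc ι) :
    eval σ g / eval σ f = eval σ' g / eval σ' f := by
  have hanalytic : AnalyticOnNhd ℂ (fun σ => eval σ g / eval σ f) (upperPolydisc ι) :=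
    ((AnalyticOnNhd.eval_mvPolynomial g).mono (Set.subset_univ _)).div
      ((AnalyticOnNhd.eval_mvPolynomial f).mono (Set.subset_univ _)) hf
  exact hanalytic.eq_of_im_eq_zero isOpen_upperPolydisc convex_upperPolydisc.isPreconnected
    him hσ hσ'

lemma eq_C_mul_of_eval_div_eq {c : ℂ} (hf : ∀ σ ∈ upperPolydisc ι, eval σ f ≠ 0)
    (hc : ∀ σ ∈ upperPolydisc ι, eval σ g / eval σ f = c) : g = C c * f := by
  refine funext_set (fun _ => {z : ℂ | 0 < z.im}) (fun _ => Complex.infinite_setOf_im_pos)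
    fun σ hσ => ?_
  rw [← upperPolydisc_eq_pi] at hσ
  rw [eval_mul, eval_C, ← hc σ hσ, div_mul_cancel₀ _ (hf σ hσ)]

end upperPolydisc

lemma IsUpperY.add_mul_ne_zero {d : ℕ} {f g : MvPolynomial (Fin d) ℂ}
    (h : IsUpperY (Polynomial.C f + Polynomial.X * Polynomial.C g)) {σ : Fin d → ℂ}
    (hσ : σ ∈ upperPolydisc (Fin d)) {τ : ℂ} (hτ : 0 < τ.im) :
    MvPolynomial.eval σ f + τ * MvPolynomial.eval σ g ≠ 0 := by
  simpa only [Polynomial.eval₂_add, Polynomial.eval₂_mul, Polynomial.eval₂_X,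
    Polynomial.eval₂_C] using h σ τ hσ hτ

/-- If two upper polynomials interlace each other in both orders, then they are
constant multiples of one another. -/
theorem interlace_symm_const_multiple {d : ℕ} (f g : MvPolynomial (Fin d) ℂ)
    (hf : IsUpper f) (hg : IsUpper g)
    (hfg : IsUpperY (Polynomial.C f + Polynomial.X * Polynomial.C g))
    (hgf : IsUpperY (Polynomial.C g + Polynomial.X * Polynomial.C f)) :
    ∃ c : ℂ, c ≠ 0 ∧ g = MvPolynomial.C c * f := by
  have him : ∀ σ ∈ upperPolydisc (Fin d),
      (MvPolynomial.eval σ g / MvPolynomial.eval σ f).im = 0 := fun σ hσ =>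
    Complex.im_div_eq_zero_of_add_mul_ne_zero (fun _ => hfg.add_mul_ne_zero hσ)
      (fun _ => hgf.add_mul_ne_zero hσ)
  have hI : (fun _ => Complex.I) ∈ upperPolydisc (Fin d) := fun _ => by simp
  exact ⟨_, div_ne_zero (hg _ hI) (hf _ hI),
    eq_C_mul_of_eval_div_eq hf fun σ hσ => eval_div_eq_of_im_eq_zero hf him hσ hI⟩
end

section
/- (Multivariate Hermite–Biehler) Let g, h ∈ ℝ[x₁,…,x_d] be polynomials with real coefficients and set f = g + i·h ∈ ℂ[x₁,…,x_d]. Then f is an upper polynomial if and only if g interlaces h, i.e. g + y·h ∈ U_{d+1} where y is a new variable. -/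
/-!
For `σ` in the open upper polydisc, restricting `f` to the complex line `t ↦ Re σ + t · Im σ`
gives a univariate polynomial without zeros in the upper half plane; factoring it over its
roots shows `|f(conj σ)| ≤ |f(σ)|`. When `f = g + i h` with `g, h` real, `f(conj σ)` is the
conjugate of `G - i H` (where `G = g(σ)`, `H = h(σ)`), so `|G - i H| ≤ |G + i H|`. Hence
`-G / H` is at least as close to `-i` as to `i`, i.e. it lies in the closed lower half plane,
and `G + τ H ≠ 0` whenever `Im τ > 0`. The converse is the specialization `y = i`.
-/

open Polynomial ComplexConjugate

namespace Complex

theorem normSq_sub_conj_sub_normSq_sub (z w : ℂ) :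
    normSq (z - conj w) - normSq (z - w) = 4 * z.im * w.im := by
  simp only [normSq_apply, sub_re, sub_im, conj_re, conj_im]
  ring

theorem norm_sub_le_norm_sub_conj {z w : ℂ} (hz : 0 ≤ z.im) (hw : 0 ≤ w.im) :
    ‖z - w‖ ≤ ‖z - conj w‖ := by
  have := normSq_sub_conj_sub_normSq_sub z w
  rw [← sq_le_sq₀ (norm_nonneg _) (norm_nonneg _), ← normSq_eq_norm_sq, ← normSq_eq_norm_sq]
  nlinarith [mul_nonneg hz hw]

theorem norm_sub_lt_norm_sub_conj {z w : ℂ} (hz : 0 < z.im) (hw : 0 < w.im) :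
    ‖z - w‖ < ‖z - conj w‖ := by
  have := normSq_sub_conj_sub_normSq_sub z w
  rw [← sq_lt_sq₀ (norm_nonneg _) (norm_nonneg _), ← normSq_eq_norm_sq, ← normSq_eq_norm_sq]
  nlinarith [mul_pos hz hw]

theorem add_mul_ne_zero_of_norm_sub_I_mul_le {G H τ : ℂ} (hne : G + I * H ≠ 0)
    (hle : ‖G - I * H‖ ≤ ‖G + I * H‖) (hτ : 0 < τ.im) : G + τ * H ≠ 0 := by
  intro h0
  obtain rfl : G = -(τ * H) := eq_neg_of_add_eq_zero_left h0
  have hH : H ≠ 0 := by rintro rfl; simp at hne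
  have hsub : -(τ * H) - I * H = -((τ - conj I) * H) := by rw [conj_I]; ring
  have hadd : -(τ * H) + I * H = -((τ - I) * H) := by ring
  rw [hsub, hadd, norm_neg, norm_neg, norm_mul, norm_mul] at hle
  have := norm_sub_lt_norm_sub_conj hτ (w := I) (by simp)
  nlinarith [norm_pos_iff.mpr hH]

end Complex

namespace Polynomial

/-- Every root `r` has `Im r ≤ 0`, so each factor `‖z - r‖` can only shrink when `z` is
reflected to `conj z`. -/
theorem norm_eval_conj_le {F : ℂ[X]} (hF : ∀ w : ℂ, 0 < w.im → F.eval w ≠ 0) {z : ℂ}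
    (hz : 0 ≤ z.im) : ‖F.eval (conj z)‖ ≤ ‖F.eval z‖ := by
  have hF0 : F ≠ 0 := by rintro rfl; exact hF Complex.I (by simp) eval_zero
  have hsplit := IsAlgClosed.splits F
  have norm_prod (m : Multiset ℂ) : ‖m.prod‖ = (m.map (‖·‖)).prod :=
    map_multiset_prod (normHom : ℂ →*₀ ℝ) m
  rw [hsplit.eval_eq_prod_roots, hsplit.eval_eq_prod_roots, norm_mul, norm_mul, norm_prod,
    norm_prod, Multiset.map_map, Multiset.map_map]
  gcongr
  refine Multiset.prod_map_le_prod_map₀ _ _ (fun _ _ => norm_nonneg _) fun r hr => ?_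
  have hr : r.im ≤ 0 := by
    by_contra! hpos
    exact hF r hpos ((mem_roots hF0).mp hr)
  calc ‖conj z - r‖
      = ‖z - conj r‖ := by rw [← Complex.norm_conj (z - conj r), map_sub, Complex.conj_conj]
    _ ≤ ‖z - r‖ := by
      simpa using Complex.norm_sub_le_norm_sub_conj hz (w := conj r) (by simpa using hr)

end Polynomial

theorem MvPolynomial.eval_conj_map_ofReal {ι : Type*} (p : MvPolynomial ι ℝ) (σ : ι → ℂ) :
    eval (fun i => conj (σ i)) (map (algebraMap ℝ ℂ) p) =
      conj (eval σ (map (algebraMap ℝ ℂ) p)) := by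
  rw [eval_map, eval_map, eval₂_comp_left]
  congr 1
  ext
  simp

theorem IsUpper.norm_eval_conj_le {d : ℕ} {f : MvPolynomial (Fin d) ℂ} (hf : IsUpper f)
    {σ : Fin d → ℂ} (hσ : ∀ i, 0 < (σ i).im) :
    ‖MvPolynomial.eval (fun i => conj (σ i)) f‖ ≤ ‖MvPolynomial.eval σ f‖ := by
  set F : ℂ[X] := MvPolynomial.aeval (fun i => C ((σ i).re : ℂ) + C ((σ i).im : ℂ) * X) f
  have hF (t : ℂ) : F.eval t = MvPolynomial.eval (fun i => (σ i).re + (σ i).im * t) f := by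
    rw [← coe_aeval_eq_eval, MvPolynomial.comp_aeval_apply]
    simp
  have hFupper (w : ℂ) (hw : 0 < w.im) : F.eval w ≠ 0 := by
    rw [hF]
    exact hf _ fun i => by simpa using mul_pos (hσ i) hw
  have := F.norm_eval_conj_le hFupper (z := Complex.I) (by simp)
  rw [hF, hF] at this
  convert this using 4 <;> funext i <;> apply Complex.ext <;> simp

/-- Multivariate Hermite–Biehler: for real polynomials `g, h`, the complex
polynomial `f = g + i·h` is an upper polynomial iff `g` interlaces `h`. -/
theorem hermite_biehler {d : ℕ} (g h : MvPolynomial (Fin d) ℝ) :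
    IsUpper (MvPolynomial.map (algebraMap ℝ ℂ) g +
        MvPolynomial.C Complex.I * MvPolynomial.map (algebraMap ℝ ℂ) h) ↔
      IsUpperY (Polynomial.C (MvPolynomial.map (algebraMap ℝ ℂ) g) +
        Polynomial.X * Polynomial.C (MvPolynomial.map (algebraMap ℝ ℂ) h)) := by
  simp only [IsUpperY, eval₂_add, eval₂_mul, eval₂_C, eval₂_X]
  constructor
  · intro hf σ τ hσ hτ
    have hne := hf σ hσ
    have hle := hf.norm_eval_conj_le hσ
    simp only [map_add, map_mul, MvPolynomial.eval_C, MvPolynomial.eval_conj_map_ofReal]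
      at hne hle
    refine Complex.add_mul_ne_zero_of_norm_sub_I_mul_le hne ?_ hτ
    rwa [← Complex.norm_conj, map_sub, map_mul, Complex.conj_I, neg_mul, sub_neg_eq_add]
  · intro hY σ hσ
    simpa using hY σ Complex.I hσ (by simp)
end

section
/- (Multivariate Obreschkoff theorem) Let f, g ∈ ℝ[x₁,…,x_d] be real upper polynomials (i.e. both lie in RU_d). Then the following are equivalent: (1) for all real α, β, the polynomial α·f + β·g is either zero or a real upper polynomial; (2) either f interlaces g (f + y·g ∈ U_{d+1}) or g interlaces f (g + y·f ∈ U_{d+1}). -/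
open Set

section

variable {E : Type*} [NormedAddCommGroup E] [NormedSpace ℂ E] {U : Set E} {w : E → ℂ} {z₀ : E}

theorem AnalyticOnNhd.eqOn_of_im_nonneg_of_im_eq_zero (hw : AnalyticOnNhd ℂ w U)
    (hU : IsPreconnected U) (hUo : IsOpen U) (hz₀ : z₀ ∈ U) (him : ∀ z ∈ U, 0 ≤ (w z).im)
    (h0 : (w z₀).im = 0) :
    ∀ z ∈ U, w z = w z₀ := by
  rcases hw.is_constant_or_isOpen hU with ⟨c, hc⟩ | hopen
  · intro z hz
    rw [hc z hz, hc z₀ hz₀]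
  · have hsub : w '' U ⊆ interior {c : ℂ | 0 ≤ c.im} :=
      (hopen U Subset.rfl hUo).subset_interior_iff.mpr (image_subset_iff.mpr him)
    have := hsub (mem_image_of_mem w hz₀)
    rw [Complex.interior_setOfPred_le_im, mem_ofPred_eq, h0] at this
    exact absurd this (lt_irrefl 0)

end

theorem IsPreconnected.forall_pos_or_forall_neg {X : Type*} [TopologicalSpace X] {U : Set X}
    {u : X → ℝ} (hU : IsPreconnected U) (hu : ContinuousOn u U) (h0 : ∀ x ∈ U, u x ≠ 0) :
    (∀ x ∈ U, 0 < u x) ∨ (∀ x ∈ U, u x < 0) := by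
  by_contra! ⟨⟨x, hx, hx0⟩, ⟨y, hy, hy0⟩⟩
  obtain ⟨z, hz, hz0⟩ := (hU.image u hu).ordConnected.out (mem_image_of_mem u hx)
    (mem_image_of_mem u hy) ⟨hx0, hy0⟩
  exact h0 z hz hz0

theorem Complex.forall_im_pos_add_mul_ne_zero_iff {a b : ℂ} (hb : b ≠ 0) :
    (∀ τ : ℂ, 0 < τ.im → a + τ * b ≠ 0) ↔ 0 ≤ (a / b).im := by
  constructor
  · intro h
    by_contra! hneg
    exact h (-(a / b)) (by simpa using hneg) (by field_simp; ring)
  · intro h τ hτ hz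
    have : τ = -(a / b) := by field_simp; linear_combination hz
    rw [this, Complex.neg_im] at hτ
    linarith

namespace Obreschkoff

open MvPolynomial

variable {d : ℕ}

def upperHalfSpace (d : ℕ) : Set (Fin d → ℂ) := univ.pi fun _ => {z : ℂ | 0 < z.im}

theorem isOpen_upperHalfSpace : IsOpen (upperHalfSpace d) :=
  isOpen_set_pi finite_univ fun _ _ => isOpen_lt continuous_const Complex.continuous_im

theorem isPreconnected_upperHalfSpace : IsPreconnected (upperHalfSpace d) :=
  (convex_pi fun _ _ => convex_halfSpace_im_gt 0).isPreconnected

theorem isUpper_iff {P : MvPolynomial (Fin d) ℂ} :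
    IsUpper P ↔ ∀ σ ∈ upperHalfSpace d, eval σ P ≠ 0 := by
  simp [IsUpper, upperHalfSpace]

theorem eq_of_eqOn_upperHalfSpace {P Q : MvPolynomial (Fin d) ℂ}
    (h : ∀ σ ∈ upperHalfSpace d, eval σ P = eval σ Q) : P = Q :=
  funext_set _ (fun _ => infinite_of_mem_nhds Complex.I
    ((isOpen_lt continuous_const Complex.continuous_im).mem_nhds (by simp))) h

theorem analyticOnNhd_eval_div {P Q : MvPolynomial (Fin d) ℂ} (hQ : IsUpper Q) :
    AnalyticOnNhd ℂ (fun σ => eval σ P / eval σ Q) (upperHalfSpace d) :=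
  ((AnalyticOnNhd.eval_mvPolynomial P).mono (subset_univ _)).div
    ((AnalyticOnNhd.eval_mvPolynomial Q).mono (subset_univ _)) (isUpper_iff.mp hQ)

theorem isUpperY_C_add_X_mul_C_iff {P Q : MvPolynomial (Fin d) ℂ} :
    IsUpperY (Polynomial.C P + Polynomial.X * Polynomial.C Q) ↔
      ∀ σ ∈ upperHalfSpace d, ∀ τ : ℂ, 0 < τ.im → eval σ P + τ * eval σ Q ≠ 0 := by
  simp only [IsUpperY, Polynomial.eval₂_add, Polynomial.eval₂_mul, Polynomial.eval₂_C,
    Polynomial.eval₂_X]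
  exact ⟨fun h σ hσ τ hτ => h σ τ (fun i => hσ i (mem_univ i)) hτ,
    fun h σ τ hσ hτ => h σ (fun i _ => hσ i) τ hτ⟩

theorem isUpperY_iff_im_div_nonneg {P Q : MvPolynomial (Fin d) ℂ} (hQ : IsUpper Q) :
    IsUpperY (Polynomial.C P + Polynomial.X * Polynomial.C Q) ↔
      ∀ σ ∈ upperHalfSpace d, 0 ≤ (eval σ P / eval σ Q).im := by
  rw [isUpperY_C_add_X_mul_C_iff]
  exact forall₂_congr fun σ hσ =>
    Complex.forall_im_pos_add_mul_ne_zero_iff (isUpper_iff.mp hQ σ hσ)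

theorem isUpperY_swap_of_im_div_neg {P Q : MvPolynomial (Fin d) ℂ} (hP : IsUpper P)
    (h : ∀ σ ∈ upperHalfSpace d, (eval σ P / eval σ Q).im < 0) :
    IsUpperY (Polynomial.C Q + Polynomial.X * Polynomial.C P) := by
  refine (isUpperY_iff_im_div_nonneg hP).mpr fun σ hσ => ?_
  rw [← inv_div, Complex.inv_im]
  exact div_nonneg (neg_nonneg.mpr (h σ hσ).le) (Complex.normSq_nonneg _)

def IsUpperPencil (f g : MvPolynomial (Fin d) ℝ) : Prop :=
  ∀ α β : ℝ, α • f + β • g = 0 ∨ IsUpper (map (algebraMap ℝ ℂ) (α • f + β • g))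

theorem IsUpperPencil.symm {f g : MvPolynomial (Fin d) ℝ} (h : IsUpperPencil f g) :
    IsUpperPencil g f :=
  fun α β => add_comm (β • f) (α • g) ▸ h β α

theorem eval_map_smul (r : ℝ) (f : MvPolynomial (Fin d) ℝ) (σ : Fin d → ℂ) :
    eval σ (map (algebraMap ℝ ℂ) (r • f)) = r * eval σ (map (algebraMap ℝ ℂ) f) := by
  simp [smul_eq_C_mul]

variable {f g : MvPolynomial (Fin d) ℝ}

theorem isUpperPencil_of_eq_smul {r : ℝ} (hg : IsUpper (map (algebraMap ℝ ℂ) g))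
    (hfg : f = r • g) : IsUpperPencil f g := by
  intro α β
  have hcomb : α • f + β • g = (α * r + β) • g := by rw [hfg, smul_smul, ← add_smul]
  rcases eq_or_ne (α * r + β) 0 with hc | hc
  · left
    rw [hcomb, hc, zero_smul]
  · right
    refine isUpper_iff.mpr fun σ hσ => ?_
    rw [hcomb, eval_map_smul]
    exact mul_ne_zero (Complex.ofReal_ne_zero.mpr hc) (isUpper_iff.mp hg σ hσ)

theorem isUpperPencil_of_im_div_pos (hg : IsUpper (map (algebraMap ℝ ℂ) g))
    (h : ∀ σ ∈ upperHalfSpace d,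
      0 < (eval σ (map (algebraMap ℝ ℂ) f) / eval σ (map (algebraMap ℝ ℂ) g)).im) :
    IsUpperPencil f g := by
  intro α β
  by_cases hαβ : α = 0 ∧ β = 0
  · left
    simp [hαβ.1, hαβ.2]
  · right
    refine isUpper_iff.mpr fun σ hσ hzero => hαβ ?_
    set w := eval σ (map (algebraMap ℝ ℂ) f) / eval σ (map (algebraMap ℝ ℂ) g)
    have hG := isUpper_iff.mp hg σ hσ
    have hw : (α : ℂ) * w + β = 0 := by
      rw [map_add, eval_add, eval_map_smul, eval_map_smul] at hzero
      simp only [w]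
      field_simp
      linear_combination hzero
    have hα : α = 0 :=
      (by simpa using congrArg Complex.im hw : α = 0 ∨ w.im = 0).resolve_right (h σ hσ).ne'
    subst hα
    simpa using hw

theorem eq_smul_of_isUpperPencil (hg : IsUpper (map (algebraMap ℝ ℂ) g))
    (h : IsUpperPencil f g) {σ₀ : Fin d → ℂ} (hσ₀ : σ₀ ∈ upperHalfSpace d) {r : ℝ}
    (hr : eval σ₀ (map (algebraMap ℝ ℂ) f) / eval σ₀ (map (algebraMap ℝ ℂ) g) = r) :
    f = r • g := by
  rw [div_eq_iff (isUpper_iff.mp hg σ₀ hσ₀)] at hr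
  rcases h 1 (-r) with h1 | h1
  · rwa [one_smul, neg_smul, ← sub_eq_add_neg, sub_eq_zero] at h1
  · refine absurd ?_ (isUpper_iff.mp h1 σ₀ hσ₀)
    rw [map_add, eval_add, eval_map_smul, eval_map_smul, hr]
    push_cast
    ring

theorem eq_smul_of_isUpperY (hg : IsUpper (map (algebraMap ℝ ℂ) g))
    (hI : IsUpperY (Polynomial.C (map (algebraMap ℝ ℂ) f) +
      Polynomial.X * Polynomial.C (map (algebraMap ℝ ℂ) g)))
    {σ₀ : Fin d → ℂ} (hσ₀ : σ₀ ∈ upperHalfSpace d) {r : ℝ}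
    (hr : eval σ₀ (map (algebraMap ℝ ℂ) f) / eval σ₀ (map (algebraMap ℝ ℂ) g) = r) :
    f = r • g := by
  have hconst := (analyticOnNhd_eval_div hg).eqOn_of_im_nonneg_of_im_eq_zero
    isPreconnected_upperHalfSpace isOpen_upperHalfSpace hσ₀
    ((isUpperY_iff_im_div_nonneg hg).mp hI) (by rw [hr, Complex.ofReal_im])
  refine map_injective _ (algebraMap ℝ ℂ).injective (eq_of_eqOn_upperHalfSpace fun σ hσ => ?_)
  rw [eval_map_smul, ← div_eq_iff (isUpper_iff.mp hg σ hσ), hconst σ hσ, hr]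

theorem isUpperY_of_eq_smul {r : ℝ} (hg : IsUpper (map (algebraMap ℝ ℂ) g)) (hfg : f = r • g) :
    IsUpperY (Polynomial.C (map (algebraMap ℝ ℂ) f) +
      Polynomial.X * Polynomial.C (map (algebraMap ℝ ℂ) g)) := by
  refine (isUpperY_iff_im_div_nonneg hg).mpr fun σ hσ => ?_
  rw [hfg, eval_map_smul, mul_div_cancel_right₀ _ (isUpper_iff.mp hg σ hσ), Complex.ofReal_im]

theorem isUpperPencil_of_isUpperY (hg : IsUpper (map (algebraMap ℝ ℂ) g))
    (hI : IsUpperY (Polynomial.C (map (algebraMap ℝ ℂ) f) +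
      Polynomial.X * Polynomial.C (map (algebraMap ℝ ℂ) g))) :
    IsUpperPencil f g := by
  set w := fun σ => eval σ (map (algebraMap ℝ ℂ) f) / eval σ (map (algebraMap ℝ ℂ) g)
  have him := (isUpperY_iff_im_div_nonneg hg).mp hI
  by_cases hreal : ∃ σ₀ ∈ upperHalfSpace d, (w σ₀).im = 0
  · obtain ⟨σ₀, hσ₀, h0⟩ := hreal
    exact isUpperPencil_of_eq_smul hg (eq_smul_of_isUpperY hg hI hσ₀ (Complex.ext rfl h0))
  · push Not at hreal
    exact isUpperPencil_of_im_div_pos hg fun σ hσ => (him σ hσ).lt_of_ne' (hreal σ hσ)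

theorem isUpperY_or_isUpperY_of_isUpperPencil (hf : IsUpper (map (algebraMap ℝ ℂ) f))
    (hg : IsUpper (map (algebraMap ℝ ℂ) g)) (h : IsUpperPencil f g) :
    IsUpperY (Polynomial.C (map (algebraMap ℝ ℂ) f) +
        Polynomial.X * Polynomial.C (map (algebraMap ℝ ℂ) g)) ∨
      IsUpperY (Polynomial.C (map (algebraMap ℝ ℂ) g) +
        Polynomial.X * Polynomial.C (map (algebraMap ℝ ℂ) f)) := by
  set w := fun σ => eval σ (map (algebraMap ℝ ℂ) f) / eval σ (map (algebraMap ℝ ℂ) g)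
  by_cases hreal : ∃ σ₀ ∈ upperHalfSpace d, (w σ₀).im = 0
  · obtain ⟨σ₀, hσ₀, h0⟩ := hreal
    exact Or.inl <| isUpperY_of_eq_smul hg <|
      eq_smul_of_isUpperPencil hg h hσ₀ (Complex.ext rfl h0)
  · push Not at hreal
    rcases isPreconnected_upperHalfSpace.forall_pos_or_forall_neg
      (Complex.continuous_im.comp_continuousOn (analyticOnNhd_eval_div hg).continuousOn)
      hreal with hpos | hneg
    · exact Or.inl ((isUpperY_iff_im_div_nonneg hg).mpr fun σ hσ => (hpos σ hσ).le)
    · exact Or.inr (isUpperY_swap_of_im_div_neg hf hneg)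

end Obreschkoff

/-- Multivariate Obreschkoff theorem: for real upper polynomials `f, g`, all real
linear combinations `α·f + β·g` are zero or real upper polynomials iff `f`
interlaces `g` or `g` interlaces `f`. -/
theorem obreschkoff {d : ℕ} (f g : MvPolynomial (Fin d) ℝ)
    (hf : IsUpper (MvPolynomial.map (algebraMap ℝ ℂ) f))
    (hg : IsUpper (MvPolynomial.map (algebraMap ℝ ℂ) g)) :
    (∀ α β : ℝ, α • f + β • g = 0 ∨
        IsUpper (MvPolynomial.map (algebraMap ℝ ℂ) (α • f + β • g))) ↔
      (IsUpperY (Polynomial.C (MvPolynomial.map (algebraMap ℝ ℂ) f) +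
          Polynomial.X * Polynomial.C (MvPolynomial.map (algebraMap ℝ ℂ) g)) ∨
        IsUpperY (Polynomial.C (MvPolynomial.map (algebraMap ℝ ℂ) g) +
          Polynomial.X * Polynomial.C (MvPolynomial.map (algebraMap ℝ ℂ) f))) := by
  constructor
  · exact Obreschkoff.isUpperY_or_isUpperY_of_isUpperPencil hf hg
  · rintro (hI | hI)
    · exact Obreschkoff.isUpperPencil_of_isUpperY hg hI
    · exact (Obreschkoff.isUpperPencil_of_isUpperY hf hI).symm
end

section
/- Let a, b, c, d be real numbers, not all zero. The polynomial f(x, y) = a + b·x + c·y + d·x·y is an upper polynomial in two variables (i.e. f(σ, τ) ≠ 0 whenever Im σ > 0 and Im τ > 0) if and only if b·c − a·d ≥ 0. -/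
/-!
If `a + b z + c w + d z w = 0`, then `z (b + d w) = -(a + c w)`; multiplying by the conjugate of
`b + d w` and taking imaginary parts gives `Im z · |b + d w|² = (a d - b c) · Im w`.
So when `b c - a d ≥ 0` a zero in the upper half plane forces `b + d w = 0`, hence `b = d = 0`,
and then `a + c w = 0` forces `a = c = 0`. When `b c - a d < 0`, solving for `z` at `w = i`
produces a zero with `Im z > 0`.
-/

open Complex MvPolynomial

theorem IsUpper.iff_fin_two {p : MvPolynomial (Fin 2) ℂ} :
    IsUpper p ↔ ∀ z w : ℂ, 0 < z.im → 0 < w.im → eval ![z, w] p ≠ 0 := by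
  refine ⟨fun hp z w hz hw => hp _ (Fin.forall_fin_two.2 ⟨hz, hw⟩), fun hp σ hσ => ?_⟩
  have hσ_eq : σ = ![σ 0, σ 1] := by
    funext i
    fin_cases i <;> rfl
  rw [hσ_eq]
  exact hp _ _ (hσ 0) (hσ 1)

theorem eval_multiaffine_fin_two (a b c d z w : ℂ) :
    eval ![z, w] (C a + C b * X 0 + C c * X 1 + C d * X 0 * X 1) =
      a + b * z + c * w + d * z * w := by
  simp

theorem im_mul_normSq_eq_of_multiaffine_eq_zero {a b c d : ℝ} {z w : ℂ}
    (h : (a : ℂ) + b * z + c * w + d * z * w = 0) :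
    z.im * normSq (b + d * w) = (a * d - b * c) * w.im := by
  have hre := congrArg re h
  have him := congrArg im h
  simp only [add_re, add_im, mul_re, mul_im, ofReal_re, ofReal_im, zero_re, zero_im, zero_mul,
    sub_zero, add_zero] at hre him
  simp only [normSq_apply, add_re, add_im, mul_re, mul_im, ofReal_re, ofReal_im, zero_mul,
    sub_zero, add_zero, zero_add]
  linear_combination (b + d * w.re) * him - d * w.im * hre

theorem eq_zero_of_ofReal_add_ofReal_mul_eq_zero {p q : ℝ} {w : ℂ} (hw : w.im ≠ 0)
    (h : (p : ℂ) + q * w = 0) : p = 0 ∧ q = 0 := by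
  have hre := congrArg re h
  have him := congrArg im h
  simp only [add_re, add_im, mul_re, mul_im, ofReal_re, ofReal_im, zero_re, zero_im, zero_mul,
    sub_zero, zero_add, add_zero] at hre him
  have hq : q = 0 := (mul_eq_zero.1 him).resolve_right hw
  subst hq
  exact ⟨by simpa using hre, rfl⟩

theorem eq_zero_of_multiaffine_eq_zero {a b c d : ℝ} {z w : ℂ} (hdet : 0 ≤ b * c - a * d)
    (hz : 0 < z.im) (hw : 0 < w.im) (h : (a : ℂ) + b * z + c * w + d * z * w = 0) :
    a = 0 ∧ b = 0 ∧ c = 0 ∧ d = 0 := by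
  have hN : normSq (b + d * w) = 0 := by
    have hprod : z.im * normSq (b + d * w) ≤ 0 := by
      rw [im_mul_normSq_eq_of_multiaffine_eq_zero h]
      exact mul_nonpos_of_nonpos_of_nonneg (by linarith) hw.le
    exact le_antisymm (nonpos_of_mul_nonpos_right hprod hz) (normSq_nonneg _)
  obtain ⟨rfl, rfl⟩ := eq_zero_of_ofReal_add_ofReal_mul_eq_zero hw.ne' (normSq_eq_zero.1 hN)
  obtain ⟨rfl, rfl⟩ := eq_zero_of_ofReal_add_ofReal_mul_eq_zero hw.ne' (by simpa using h)
  exact ⟨rfl, rfl, rfl, rfl⟩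

theorem exists_multiaffine_eq_zero {a b c d : ℝ} (hdet : b * c - a * d < 0) :
    ∃ z w : ℂ, 0 < z.im ∧ 0 < w.im ∧ (a : ℂ) + b * z + c * w + d * z * w = 0 := by
  have hW : (b : ℂ) + d * I ≠ 0 := by
    intro h0
    obtain ⟨rfl, rfl⟩ := eq_zero_of_ofReal_add_ofReal_mul_eq_zero (by simp) h0
    simp at hdet
  set z : ℂ := -(a + c * I) / (b + d * I)
  have hz : (a : ℂ) + b * z + c * I + d * z * I = 0 := by
    have : z * (b + d * I) = -(a + c * I) := div_mul_cancel₀ _ hW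
    linear_combination this
  have key := im_mul_normSq_eq_of_multiaffine_eq_zero hz
  rw [I_im, mul_one] at key
  exact ⟨z, I, pos_of_mul_pos_left (by linarith) (normSq_nonneg _), by simp, hz⟩

/-- For real `a, b, c, d`, not all zero, the polynomial `a + b·x + c·y + d·x·y`
is an upper polynomial in two variables iff `b·c − a·d ≥ 0`. -/
theorem multiaffine_isUpper_iff (a b c d : ℝ)
    (h : ¬(a = 0 ∧ b = 0 ∧ c = 0 ∧ d = 0)) :
    IsUpper (MvPolynomial.C ((a : ℂ)) +
        MvPolynomial.C ((b : ℂ)) * MvPolynomial.X 0 +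
        MvPolynomial.C ((c : ℂ)) * MvPolynomial.X 1 +
        MvPolynomial.C ((d : ℂ)) * MvPolynomial.X 0 * MvPolynomial.X 1 :
        MvPolynomial (Fin 2) ℂ) ↔
      b * c - a * d ≥ 0 := by
  simp only [IsUpper.iff_fin_two, eval_multiaffine_fin_two]
  constructor
  · intro hup
    by_contra! hdet
    obtain ⟨z, w, hz, hw, hzero⟩ := exists_multiaffine_eq_zero hdet
    exact hup z w hz hw hzero
  · intro hdet z w hz hw hzero
    exact h (eq_zero_of_multiaffine_eq_zero hdet hz hw hzero)
end

section
/- Let f(x, y) = Σ_{i,j} a_{i,j}·xⁱ·yʲ be a real upper polynomial in two variables (f ∈ RU₂). Then for all integers r, s ≥ 0 the coefficients satisfy the inequality a_{r,s}·a_{r+1,s+1} ≤ a_{r+1,s}·a_{r,s+1}. -/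
open Polynomial ComplexConjugate Filter
open scoped Topology Polynomial.Bivariate
open Complex (I)

namespace Polynomial

theorem eval_ne_zero_of_roots_im_nonpos {p : ℂ[X]} (hp0 : p ≠ 0) (hp : ∀ w ∈ p.roots, w.im ≤ 0)
    {z : ℂ} (hz : 0 < z.im) : p.eval z ≠ 0 :=
  fun h => (hp z (mem_roots'.mpr ⟨hp0, h⟩)).not_gt hz

theorem roots_im_nonpos_of_eval_ne_zero {p : ℂ[X]} (hp : ∀ z : ℂ, 0 < z.im → p.eval z ≠ 0) :
    ∀ w ∈ p.roots, w.im ≤ 0 :=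
  fun w hw => not_lt.mp fun h => hp w h (mem_roots'.mp hw).2

theorem im_nonpos_of_mem_roots_derivative {p : ℂ[X]} (hp : ∀ w ∈ p.roots, w.im ≤ 0) :
    ∀ w ∈ (derivative p).roots, w.im ≤ 0 := by
  intro w hw
  rcases le_or_gt p.degree 0 with hdeg | hdeg
  · simp [derivative_of_natDegree_zero (natDegree_eq_zero_iff_degree_le_zero.mpr hdeg)] at hw
  have hhull : convexHull ℝ (p.rootSet ℂ) ⊆ {w : ℂ | w.im ≤ 0} :=
    convexHull_min (fun v hv => hp v (by simpa [rootSet_def] using hv))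
      (convex_halfSpace_le Complex.imLm.isLinear 0)
  exact hhull (rootSet_derivative_subset_convexHull_rootSet hdeg (by simpa [rootSet_def] using hw))

theorem im_eval_derivative_mul_conj_nonpos {p : ℂ[X]} (hp : ∀ w ∈ p.roots, w.im ≤ 0) {z : ℂ}
    (hz : 0 ≤ z.im) : ((derivative p).eval z * conj (p.eval z)).im ≤ 0 := by
  by_cases h0 : p.eval z = 0
  · simp [h0]
  have hterm : ∀ w ∈ p.roots, (1 / (z - w)).im ≤ 0 := fun w hw => by
    rw [one_div, Complex.inv_im, neg_div]
    exact neg_nonpos.mpr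
      (div_nonneg (by rw [Complex.sub_im]; linarith [hp w hw]) (Complex.normSq_nonneg _))
  have hlog : ((derivative p).eval z / p.eval z).im ≤ 0 := by
    rw [(IsAlgClosed.splits p).eval_derivative_div_eval_of_ne_zero h0]
    change Complex.imLm _ ≤ 0
    rw [map_multiset_sum, Multiset.map_map]
    refine (Multiset.sum_le_card_nsmul _ 0 fun x hx => ?_).trans (nsmul_zero _).le
    obtain ⟨w, hw, rfl⟩ := Multiset.mem_map.mp hx
    exact hterm w hw
  have hmul : (derivative p).eval z * conj (p.eval z)
      = (derivative p).eval z / p.eval z * (Complex.normSq (p.eval z) : ℂ) := by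
    rw [← Complex.mul_conj]
    field_simp
  rw [hmul, Complex.im_mul_ofReal]
  exact mul_nonpos_of_nonpos_of_nonneg hlog (Complex.normSq_nonneg _)

theorem im_coeff_one_mul_conj_coeff_zero_nonpos {p : ℂ[X]} (hp : ∀ w ∈ p.roots, w.im ≤ 0) :
    (p.coeff 1 * conj (p.coeff 0)).im ≤ 0 := by
  have := im_eval_derivative_mul_conj_nonpos hp (z := 0) le_rfl
  rwa [← coeff_zero_eq_eval_zero, ← coeff_zero_eq_eval_zero, coeff_derivative, Nat.cast_zero,
    zero_add, zero_add, mul_one] at this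

theorem norm_eval_eq_mul_prod_roots (p : ℂ[X]) (x : ℂ) :
    ‖p.eval x‖ = ‖p.leadingCoeff‖ * (p.roots.map fun r => ‖x - r‖).prod := by
  conv_lhs => rw [(IsAlgClosed.splits p).eq_prod_roots]
  rw [eval_mul, eval_C, norm_mul, eval_multiset_prod, Multiset.map_map]
  congr 1
  change (normHom : ℂ →*₀ ℝ) _ = _
  rw [map_multiset_prod, Multiset.map_map]
  simp [Function.comp_def]

theorem norm_eval_le_of_roots_im_nonpos {p : ℂ[X]} (hp : ∀ w ∈ p.roots, w.im ≤ 0) {N : ℕ}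
    (hN : p.natDegree ≤ N) {z : ℂ} (hz : 0 < z.im) (w : ℂ) :
    ‖p.eval w‖ ≤ (1 + ‖w - z‖ / z.im) ^ N * ‖p.eval z‖ := by
  set K := 1 + ‖w - z‖ / z.im
  have hK : 1 ≤ K := le_add_of_nonneg_right (by positivity)
  have hroot : ∀ r ∈ p.roots, ‖w - r‖ ≤ K * ‖z - r‖ := fun r hr => by
    have him : z.im ≤ ‖z - r‖ := by
      have := Complex.abs_im_le_norm (z - r)
      rw [Complex.sub_im] at this
      linarith [le_abs_self (z.im - r.im), hp r hr]
    have : ‖w - z‖ ≤ ‖w - z‖ / z.im * ‖z - r‖ := by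
      rw [div_mul_eq_mul_div, le_div_iff₀ hz]
      exact mul_le_mul_of_nonneg_left him (norm_nonneg _)
    calc ‖w - r‖ ≤ ‖w - z‖ + ‖z - r‖ := norm_sub_le_norm_sub_add_norm_sub _ _ _
      _ ≤ K * ‖z - r‖ := by simp only [K]; linarith
  rw [norm_eval_eq_mul_prod_roots p w]
  calc ‖p.leadingCoeff‖ * (p.roots.map fun r => ‖w - r‖).prod
      ≤ ‖p.leadingCoeff‖ * (p.roots.map fun r => K * ‖z - r‖).prod := by
        gcongr
        exact Multiset.prod_map_le_prod_map₀ _ _ (fun _ _ => norm_nonneg _) hroot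
    _ = K ^ Multiset.card p.roots * ‖p.eval z‖ := by
        rw [norm_eval_eq_mul_prod_roots p z, Multiset.prod_map_mul, Multiset.map_const',
          Multiset.prod_replicate]
        ring
    _ ≤ K ^ N * ‖p.eval z‖ := by
        gcongr
        exact (card_roots' p).trans hN

theorem im_nonpos_of_mem_roots_of_tendsto {ι : Type*} {l : Filter ι} [l.NeBot] {P : ι → ℂ[X]}
    {p : ℂ[X]} {N : ℕ} (hP : ∀ᶠ i in l, (P i).natDegree ≤ N ∧ ∀ w ∈ (P i).roots, w.im ≤ 0)
    (hlim : ∀ x, Tendsto (fun i => (P i).eval x) l (𝓝 (p.eval x))) :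
    ∀ z ∈ p.roots, z.im ≤ 0 := by
  intro z hz
  by_contra! hzim
  obtain ⟨hp0, hpz⟩ := mem_roots'.mp hz
  obtain ⟨w, hw⟩ : ∃ w, p.eval w ≠ 0 := by
    by_contra! h
    exact hp0 (Polynomial.funext fun x => by simp [h x])
  have hbound : ‖p.eval w‖ ≤ (1 + ‖w - z‖ / z.im) ^ N * ‖p.eval z‖ :=
    le_of_tendsto_of_tendsto ((hlim w).norm) (((hlim z).norm).const_mul _)
      (hP.mono fun i hi => norm_eval_le_of_roots_im_nonpos hi.2 hi.1 hzim w)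
  rw [hpz.eq_zero, norm_zero, mul_zero] at hbound
  exact hw (norm_le_zero_iff.mp hbound)

theorem tendsto_eval_I_mul_div_pow {q : ℂ[X]} {n : ℕ} (hq : q.natDegree ≤ n) :
    Tendsto (fun T : ℝ => q.eval (I * T) / (I * T) ^ n) atTop (𝓝 (q.coeff n)) := by
  have hinv : Tendsto (fun T : ℝ => (I * T)⁻¹) atTop (𝓝 0) := by
    have := (Complex.continuous_ofReal.tendsto 0).comp tendsto_inv_atTop_zero
    simpa [mul_comm] using this.const_mul (-I)
  have hrefl : Tendsto (fun T : ℝ => (reflect n q).eval (I * T)⁻¹) atTop (𝓝 (q.coeff n)) := by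
    have := ((reflect n q).continuous.tendsto 0).comp hinv
    rwa [← coeff_zero_eq_eval_zero, coeff_reflect, revAt_le (Nat.zero_le n), Nat.sub_zero] at this
  refine hrefl.congr' ((eventually_gt_atTop 0).mono fun T hT => ?_)
  have hne : I * (T : ℂ) ≠ 0 := mul_ne_zero Complex.I_ne_zero (Complex.ofReal_ne_zero.mpr hT.ne')
  let := invertibleOfNonzero hne
  rw [eq_div_iff (pow_ne_zero n hne), ← invOf_eq_inv, eval, eval, eval₂_reflect_mul_pow _ _ _ _ hq]

theorem coeff_one_nonpos_of_im_aeval_nonpos (R : ℝ[X])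
    (h : ∀ ε : ℝ, 0 < ε → (aeval (I * ε) R).im ≤ 0) : R.coeff 1 ≤ 0 := by
  set g : ℝ → ℝ := fun ε => (aeval (I * ε) R.divX).re
  have hg : ∀ ε : ℝ, 0 < ε → g ε ≤ 0 := fun ε hε => by
    have him : (aeval (I * ε) R).im = ε * g ε := by
      conv_lhs => rw [← X_mul_divX_add R]
      simp [g, Complex.mul_im, -X_mul_divX_add]
    exact nonpos_of_mul_nonpos_right (him ▸ h ε hε) hε
  have h0 : g 0 = R.coeff 1 := by
    simp [g, ← coeff_zero_eq_aeval_zero', coeff_divX]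
  rw [← h0]
  exact le_of_tendsto ((show Continuous g by fun_prop).continuousWithinAt.tendsto (s := Set.Ioi 0))
    (eventually_nhdsWithin_of_forall hg)

theorem coeff_zero_mul_coeff_one_le_of_im_nonpos (A B : ℝ[X])
    (h : ∀ ε : ℝ, 0 < ε → (aeval (I * ε) B * conj (aeval (I * ε) A)).im ≤ 0) :
    A.coeff 0 * B.coeff 1 ≤ B.coeff 0 * A.coeff 1 := by
  -- `conj A(iε) = A(-iε)`, so `h` is about `B(x) A(-x)`, whose linear coefficient is `A₀B₁ - B₀A₁`.
  have hR := coeff_one_nonpos_of_im_aeval_nonpos (B * A.comp (C (-1) * X)) fun ε hε => by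
    convert h ε hε using 2
    rw [map_mul, aeval_comp, ← aeval_conj]
    simp
  simp only [coeff_mul, Finset.Nat.sum_antidiagonal_succ, Finset.Nat.antidiagonal_zero,
    Finset.sum_singleton, comp_C_mul_X_coeff, zero_add, pow_one, pow_zero] at hR
  linarith

theorem natDegree_eval_C_le_s18 {R : Type*} [Semiring R] (H : R[X][Y]) (y : R) :
    (H.eval (C y)).natDegree ≤ H.support.sup fun j => (H.coeff j).natDegree := by
  rw [eval_eq_sum, sum_def]
  refine natDegree_sum_le_of_forall_le _ _ fun j hj => ?_
  rw [← C_pow]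
  exact (natDegree_mul_C_le _ _).trans (Finset.le_sup (f := fun j => (H.coeff j).natDegree) hj)

end Polynomial

namespace Polynomial.Bivariate

theorem eval_equivMvPolynomial {R : Type*} [CommSemiring R] (H : R[X][Y]) (σ : Fin 2 → R) :
    MvPolynomial.eval σ (equivMvPolynomial R H) = H.evalEval (σ 0) (σ 1) := by
  have : (MvPolynomial.eval σ).comp (equivMvPolynomial R : R[X][Y] →+* _) =
      evalEvalRingHom (σ 0) (σ 1) := by
    ext <;> simp
  exact RingHom.congr_fun this H

theorem map_equivMvPolynomial {R S : Type*} [CommSemiring R] [CommSemiring S] (φ : R →+* S)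
    (H : R[X][Y]) : MvPolynomial.map φ (equivMvPolynomial R H) =
      equivMvPolynomial S (H.map (mapRingHom φ)) := by
  have : (MvPolynomial.map φ).comp (equivMvPolynomial R : R[X][Y] →+* _) =
      (equivMvPolynomial S : S[X][Y] →+* MvPolynomial (Fin 2) S).comp
        (mapRingHom (mapRingHom φ)) := by
    ext <;> simp
  exact RingHom.congr_fun this H

theorem coeff_equivMvPolynomial {R : Type*} [CommSemiring R] (H : R[X][Y]) (i j : ℕ) :
    (equivMvPolynomial R H).coeff (Finsupp.single 0 i + Finsupp.single 1 j) =
      (H.coeff j).coeff i := by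
  induction H using Polynomial.induction_on' with
  | add p q hp hq => simp [hp, hq]
  | monomial n p =>
    induction p using Polynomial.induction_on' with
    | add p q hp hq => simp_all [map_add]
    | monomial m a =>
      have hmono : equivMvPolynomial R (monomial n (monomial m a)) =
          MvPolynomial.monomial (Finsupp.single 0 m + Finsupp.single 1 n) a := by
        simp [← C_mul_X_pow_eq_monomial, MvPolynomial.X_pow_eq_monomial,
          MvPolynomial.C_mul_monomial, MvPolynomial.monomial_mul]
      have hexp : Finsupp.single (0 : Fin 2) m + Finsupp.single 1 n =
          Finsupp.single 0 i + Finsupp.single 1 j ↔ m = i ∧ n = j := by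
        refine ⟨fun h => ⟨by simpa using DFunLike.congr_fun h 0,
          by simpa using DFunLike.congr_fun h 1⟩, ?_⟩
        rintro ⟨rfl, rfl⟩
        rfl
      rw [hmono, MvPolynomial.coeff_monomial]
      by_cases h : m = i ∧ n = j
      · obtain ⟨rfl, rfl⟩ := h
        simp
      · rw [if_neg (mt hexp.mp h), coeff_monomial]
        rcases not_and_or.mp h with h | h <;> split_ifs <;> simp [coeff_monomial, h]

theorem isUpper_equivMvPolynomial_iff {H : ℂ[X][Y]} :
    IsUpper (equivMvPolynomial ℂ H) ↔ ∀ x y : ℂ, 0 < x.im → 0 < y.im → H.evalEval x y ≠ 0 := by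
  simp only [IsUpper, eval_equivMvPolynomial, Fin.forall_fin_two]
  exact ⟨fun h x y hx hy => h ![x, y] ⟨hx, hy⟩, fun h σ hσ => h _ _ hσ.1 hσ.2⟩

theorem im_nonpos_of_mem_roots_leadingCoeff {H : ℂ[X][Y]} (hH : IsUpper (equivMvPolynomial ℂ H)) :
    ∀ z ∈ H.leadingCoeff.roots, z.im ≤ 0 := by
  rw [isUpper_equivMvPolynomial_iff] at hH
  refine im_nonpos_of_mem_roots_of_tendsto (l := atTop)
    (P := fun T : ℝ => H.eval (C (I * T)) * C ((I * T) ^ H.natDegree)⁻¹)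
    (N := H.support.sup fun j => (H.coeff j).natDegree) ?_ fun x => ?_
  · filter_upwards [eventually_gt_atTop 0] with T hT
    refine ⟨(natDegree_mul_C_le _ _).trans (natDegree_eval_C_le_s18 _ _),
      roots_im_nonpos_of_eval_ne_zero fun x hx => ?_⟩
    have hIT : I * (T : ℂ) ≠ 0 := mul_ne_zero Complex.I_ne_zero (Complex.ofReal_ne_zero.mpr hT.ne')
    rw [eval_mul, eval_C]
    exact mul_ne_zero (hH x _ hx (by simpa using hT)) (inv_ne_zero (pow_ne_zero _ hIT))
  · have := tendsto_eval_I_mul_div_pow (q := H.map (evalRingHom x)) natDegree_map_le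
    simp only [map_evalRingHom_eval, coeff_map, coe_evalRingHom, div_eq_mul_inv] at this
    simp only [eval_mul, eval_C]
    exact this

theorem derivative_eq_zero_or_isUpper {H : ℂ[X][Y]} (hH : IsUpper (equivMvPolynomial ℂ H)) :
    derivative H = 0 ∨ IsUpper (equivMvPolynomial ℂ (derivative H)) := by
  rcases Nat.eq_zero_or_pos H.natDegree with h0 | hpos
  · exact Or.inl (derivative_of_natDegree_zero h0)
  have hlc := im_nonpos_of_mem_roots_leadingCoeff hH
  rw [isUpper_equivMvPolynomial_iff] at hH ⊢
  refine Or.inr fun x y hx hy => ?_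
  set S := H.map (evalRingHom x)
  have hS : ∀ w ∈ S.roots, w.im ≤ 0 := roots_im_nonpos_of_eval_ne_zero fun w hw => by
    simpa [S, map_evalRingHom_eval] using hH x w hx hw
  have hS' : derivative S ≠ 0 := by
    rw [Ne, derivative_eq_zero]
    intro h
    have : S.coeff H.natDegree = 0 := coeff_eq_zero_of_natDegree_lt (h ▸ hpos)
    refine eval_ne_zero_of_roots_im_nonpos ?_ hlc hx (by simpa [S, coeff_map] using this)
    exact leadingCoeff_ne_zero.mpr (ne_zero_of_natDegree_gt hpos)
  rw [← map_evalRingHom_eval, ← derivative_map]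
  exact eval_ne_zero_of_roots_im_nonpos hS' (im_nonpos_of_mem_roots_derivative hS) hy

end Polynomial.Bivariate

namespace MvPolynomial

theorem coeff_iterate_pderiv {σ R : Type*} [CommSemiring R] (i : σ) (k : ℕ)
    (p : MvPolynomial σ R) (m : σ →₀ ℕ) :
    coeff m ((pderiv i)^[k] p) = coeff (m + Finsupp.single i k) p * (m i + k).descFactorial k := by
  induction k generalizing m with
  | zero => simp
  | succ k ih =>
    rw [Function.iterate_succ_apply', coeff_pderiv, ih, add_assoc, ← Finsupp.single_add,
      Finsupp.add_apply, Finsupp.single_eq_same, add_comm 1 k, mul_assoc, ← Nat.cast_add_one,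
      ← Nat.cast_mul, Nat.descFactorial_succ, show m i + (k + 1) - k = m i + 1 by omega, show m i + (k + 1) = m i + 1 + k by omega,
      mul_comm (m i + 1)]

theorem coeff_iterate_pderiv_zero_iterate_pderiv_one {R : Type*} [CommSemiring R]
    (f : MvPolynomial (Fin 2) R) (r s i j : ℕ) :
    coeff (Finsupp.single 0 i + Finsupp.single 1 j) ((pderiv 0)^[r] ((pderiv 1)^[s] f)) =
      coeff (Finsupp.single 0 (i + r) + Finsupp.single 1 (j + s)) f *
        ((i + r).descFactorial r * (j + s).descFactorial s) := by
  have hexp : Finsupp.single (0 : Fin 2) i + Finsupp.single 1 j + Finsupp.single 0 r +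
      Finsupp.single 1 s = Finsupp.single 0 (i + r) + Finsupp.single 1 (j + s) := by
    ext k
    fin_cases k <;> simp
  rw [coeff_iterate_pderiv, coeff_iterate_pderiv, hexp]
  simp only [Finsupp.coe_add, Pi.add_apply, Finsupp.single_eq_same, Finsupp.single_eq_of_ne,
    ne_eq, zero_ne_one, one_ne_zero, not_false_eq_true, zero_add, add_zero]
  ring

end MvPolynomial

theorem IsUpper.rename {d : ℕ} {f : MvPolynomial (Fin d) ℂ} (hf : IsUpper f)
    (e : Equiv.Perm (Fin d)) : IsUpper (MvPolynomial.rename e f) := fun σ hσ => by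
  rw [MvPolynomial.eval_rename]
  exact hf _ fun i => hσ (e i)

open MvPolynomial in
theorem IsUpper.pderiv_eq_zero_or_isUpper {f : MvPolynomial (Fin 2) ℂ} (hf : IsUpper f)
    (i : Fin 2) : pderiv i f = 0 ∨ IsUpper (pderiv i f) := by
  have hone : ∀ g : MvPolynomial (Fin 2) ℂ, IsUpper g → pderiv 1 g = 0 ∨ IsUpper (pderiv 1 g) := by
    intro g hg
    obtain ⟨H, rfl⟩ := (Polynomial.Bivariate.equivMvPolynomial ℂ).surjective g
    rw [Polynomial.Bivariate.pderiv_one_equivMvPolynomial]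
    simpa using Polynomial.Bivariate.derivative_eq_zero_or_isUpper hg
  match i with
  | 0 =>
    have hswap : pderiv 0 f = MvPolynomial.rename (Equiv.swap 0 1)
        (pderiv 1 (MvPolynomial.rename (Equiv.swap 0 1) f)) := by
      rw [← pderiv_rename (Equiv.injective _), rename_rename, ← Equiv.coe_trans, Equiv.swap_swap,
        Equiv.coe_refl, rename_id]
      rfl
    rw [hswap]
    rcases hone _ (hf.rename _) with h | h
    · exact Or.inl (by rw [h, map_zero])
    · exact Or.inr (h.rename _)
  | 1 => exact hone f hf

open MvPolynomial in
theorem iterate_pderiv_eq_zero_or_isUpper {f : MvPolynomial (Fin 2) ℂ} (hf : f = 0 ∨ IsUpper f)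
    (i : Fin 2) (k : ℕ) : (pderiv i)^[k] f = 0 ∨ IsUpper ((pderiv i)^[k] f) := by
  induction k with
  | zero => exact hf
  | succ k ih =>
    rw [Function.iterate_succ_apply']
    rcases ih with h | h
    · exact Or.inl (by rw [h, map_zero])
    · exact h.pderiv_eq_zero_or_isUpper i

open MvPolynomial Polynomial.Bivariate in
theorem coeff_quadratic_inequality_zero_zero (g : MvPolynomial (Fin 2) ℝ)
    (hg : map (algebraMap ℝ ℂ) g = 0 ∨ IsUpper (map (algebraMap ℝ ℂ) g)) :
    g.coeff (Finsupp.single 0 0 + Finsupp.single 1 0) *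
        g.coeff (Finsupp.single 0 1 + Finsupp.single 1 1) ≤
      g.coeff (Finsupp.single 0 1 + Finsupp.single 1 0) *
        g.coeff (Finsupp.single 0 0 + Finsupp.single 1 1) := by
  rcases hg with hg | hg
  · rw [map_eq_zero_iff _ (map_injective _ (algebraMap ℝ ℂ).injective)] at hg
    simp [hg]
  obtain ⟨F, rfl⟩ := (equivMvPolynomial ℝ).surjective g
  rw [map_equivMvPolynomial, isUpper_equivMvPolynomial_iff] at hg
  simp only [coeff_equivMvPolynomial]
  have := Polynomial.coeff_zero_mul_coeff_one_le_of_im_nonpos (F.coeff 0) (F.coeff 1)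
    fun ε hε => by
      set q := (F.map (Polynomial.mapRingHom (algebraMap ℝ ℂ))).map (evalRingHom (I * ε))
      have hq := Polynomial.im_coeff_one_mul_conj_coeff_zero_nonpos (p := q)
        (Polynomial.roots_im_nonpos_of_eval_ne_zero fun y hy => by
          simpa [q, map_evalRingHom_eval] using hg (I * ε) y (by simpa using hε) hy)
      simpa [q, Polynomial.coeff_map, eval_map_algebraMap] using hq
  linarith

open MvPolynomial in
/-- Coefficient inequalities for real upper polynomials in two variables:
if `f = Σ a_{i,j} xⁱyʲ ∈ RU₂` then `a_{r,s}·a_{r+1,s+1} ≤ a_{r+1,s}·a_{r,s+1}`. -/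
theorem coeff_quadratic_inequality (f : MvPolynomial (Fin 2) ℝ)
    (hf : IsUpper (MvPolynomial.map (algebraMap ℝ ℂ) f)) (r s : ℕ) :
    f.coeff (Finsupp.single 0 r + Finsupp.single 1 s) *
        f.coeff (Finsupp.single 0 (r + 1) + Finsupp.single 1 (s + 1)) ≤
      f.coeff (Finsupp.single 0 (r + 1) + Finsupp.single 1 s) *
        f.coeff (Finsupp.single 0 r + Finsupp.single 1 (s + 1)) := by
  set g := (pderiv 0)^[r] ((pderiv 1)^[s] f)
  have hmap : ∀ (i : Fin 2) (k : ℕ) (p : MvPolynomial (Fin 2) ℝ),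
      map (algebraMap ℝ ℂ) ((pderiv i)^[k] p) = (pderiv i)^[k] (map (algebraMap ℝ ℂ) p) :=
    fun i k => Function.Semiconj.iterate_right (fun _ => pderiv_map.symm) k
  have hg : map (algebraMap ℝ ℂ) g = 0 ∨ IsUpper (map (algebraMap ℝ ℂ) g) := by
    rw [hmap, hmap]
    exact iterate_pderiv_eq_zero_or_isUpper (iterate_pderiv_eq_zero_or_isUpper (.inr hf) 1 s) 0 r
  have hbase := coeff_quadratic_inequality_zero_zero g hg
  simp only [g, coeff_iterate_pderiv_zero_iterate_pderiv_one, zero_add, add_comm 1] at hbase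
  have hpos : ∀ n k : ℕ, k ≤ n → (0 : ℝ) < n.descFactorial k :=
    fun n k h => Nat.cast_pos.mpr (Nat.descFactorial_pos.mpr h)
  have hK : (0 : ℝ) < r.descFactorial r * (r + 1).descFactorial r *
      (s.descFactorial s * (s + 1).descFactorial s) :=
    mul_pos (mul_pos (hpos _ _ le_rfl) (hpos _ _ (by omega)))
      (mul_pos (hpos _ _ le_rfl) (hpos _ _ (by omega)))
  exact le_of_mul_le_mul_left (by linear_combination hbase) hK
end

section
/- Let f(x, y) ∈ ℝ[x, y] be a real upper polynomial in two variables (f ∈ RU₂) such that every monomial xⁱyʲ appearing in f with nonzero coefficient has both i and j even. Then f factors as a product of univariate polynomials: there exist univariate real polynomials g(x) and h(y), each with all real roots (i.e. g, h ∈ RU₁), such that f(x, y) = g(x)·h(y). -/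
/-!
Since only even powers occur, `f(a, b)` depends only on `a²` and `b²`, so the upper half plane
condition makes `f(a, b) ≠ 0` as soon as `a` and `b` are both non-real. For non-real `τ` the
slice `x ↦ f(x, τ)` therefore has only real roots, so it is `c • q` with `q` real, and then
`f(x, τ̄) = c̄ • q`: hence `f(a, τ) f(b, τ̄)` is symmetric in `a, b`. Read as an identity between
polynomials in `τ`, this spreads from the pairs `(τ, τ̄)` to all pairs of points, which gives
`f(a, b) f(c, d) = f(a, d) f(c, b)`. At a real point `(u, v)` with `f(u, v) ≠ 0` this says
`f(x, y) = f(x, v) f(u, y) / f(u, v)`, and a zero of either factor makes `f` vanish on a whole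
line `{z} × ℂ` or `ℂ × {z}`, which forces `z` to be real.
-/

open Polynomial Complex ComplexConjugate

namespace Polynomial

theorem exists_eq_C_mul_map_of_forall_isRoot_im_eq_zero {p : ℂ[X]}
    (hp : ∀ z, p.IsRoot z → z.im = 0) : ∃ (c : ℂ) (q : ℝ[X]), p = C c * q.map (algebraMap ℝ ℂ) := by
  refine ⟨p.leadingCoeff, (p.roots.map fun z => X - C z.re).prod, ?_⟩
  conv_lhs => rw [(IsAlgClosed.splits p).eq_prod_roots]
  rw [Polynomial.map_multiset_prod, Multiset.map_map]
  congr 2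
  refine Multiset.map_congr rfl fun z hz => ?_
  have hz : (z.re : ℂ) = z := Complex.ext rfl (by simp [hp z (isRoot_of_mem_roots hz)])
  simp [hz]

theorem eq_zero_of_eval_ofReal_mul_eq_zero {p : ℂ[X]} {c : ℂ} (hc : c ≠ 0)
    (h : ∀ t : ℝ, t ≠ 0 → p.eval (t * c) = 0) : p = 0 := by
  refine eq_zero_of_infinite_isRoot p (Set.Infinite.mono ?_
    ((Set.finite_singleton (0 : ℝ)).infinite_compl.image
      (mul_left_injective₀ hc |>.comp ofReal_injective).injOn))
  rintro _ ⟨t, ht, rfl⟩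
  exact h t ht

/- Fix `t ≠ 0`: the identity at `(u + t i, u - t i)` holds for real `u`, hence for all `u`.
Then fix `u`: it holds for `w = t i`, hence for all `w`, at `(u + w, u - w)`. -/
theorem eval_mul_eval_swap_of_conj {P Q : ℂ[X]}
    (h : ∀ τ : ℂ, τ.im ≠ 0 → P.eval τ * Q.eval (conj τ) = P.eval (conj τ) * Q.eval τ)
    (z w : ℂ) : P.eval z * Q.eval w = P.eval w * Q.eval z := by
  have hline (t : ℝ) (ht : t ≠ 0) (u : ℂ) :
      P.eval (u + t * I) * Q.eval (u - t * I) = P.eval (u - t * I) * Q.eval (u + t * I) := by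
    have hzero : P.comp (X + C (t * I)) * Q.comp (X - C (t * I))
        - P.comp (X - C (t * I)) * Q.comp (X + C (t * I)) = 0 := by
      refine eq_zero_of_eval_ofReal_mul_eq_zero one_ne_zero fun s _ => ?_
      have hconj : conj ((s : ℂ) + t * I) = s - t * I := by simp [sub_eq_add_neg]
      simpa [sub_eq_zero, hconj] using h (s + t * I) (by simpa using ht)
    simpa [sub_eq_zero] using congrArg (eval u) hzero
  have hzero (u : ℂ) : P.comp (C u + X) * Q.comp (C u - X)
      - P.comp (C u - X) * Q.comp (C u + X) = 0 :=
    eq_zero_of_eval_ofReal_mul_eq_zero I_ne_zero fun t ht => by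
      simpa [sub_eq_zero] using hline t ht u
  have := congrArg (eval ((z - w) / 2)) (hzero ((z + w) / 2))
  simp only [eval_sub, eval_mul, eval_comp, eval_add, eval_C, eval_X, eval_zero] at this
  rwa [show (z + w) / 2 + (z - w) / 2 = z by ring, show (z + w) / 2 - (z - w) / 2 = w by ring,
    sub_eq_zero] at this

end Polynomial

namespace MvPolynomial

theorem aeval_eq_of_sq_eq {σ R S : Type*} [CommSemiring R] [CommSemiring S] [Algebra R S]
    {f : MvPolynomial σ R} (heven : ∀ m ∈ f.support, ∀ i, Even (m i))
    {x y : σ → S} (hxy : ∀ i, x i ^ 2 = y i ^ 2) : aeval x f = aeval y f := by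
  simp only [aeval_def, eval₂_eq]
  refine Finset.sum_congr rfl fun m hm => congrArg _ (Finset.prod_congr rfl fun i _ => ?_)
  obtain ⟨k, hk⟩ := (heven m hm i).two_dvd
  rw [hk, pow_mul, pow_mul, hxy]

theorem aeval_ne_zero_of_isUpper_of_even {d : ℕ} {f : MvPolynomial (Fin d) ℝ}
    (hf : IsUpper (map (algebraMap ℝ ℂ) f)) (heven : ∀ m ∈ f.support, ∀ i, Even (m i))
    {x : Fin d → ℂ} (hx : ∀ i, (x i).im ≠ 0) : aeval x f ≠ 0 := by
  let y i := if 0 < (x i).im then x i else -x i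
  have hy : ∀ i, 0 < (y i).im := fun i => by
    by_cases h : 0 < (x i).im
    · simp [y, h]
    · simpa [y, h] using lt_of_le_of_ne (not_lt.1 h) (hx i)
  rw [aeval_eq_of_sq_eq heven (y := y) fun i => by by_cases h : 0 < (x i).im <;> simp [y, h]]
  simpa [eval_map, aeval_def] using hf y hy

section Slice

variable {R S : Type*} [CommSemiring R] [CommSemiring S] [Algebra R S]
  (f : MvPolynomial (Fin 2) R)

noncomputable def sliceX (b : S) : S[X] := aeval ![Polynomial.X, Polynomial.C b] f

noncomputable def sliceY (a : S) : S[X] := aeval ![Polynomial.C a, Polynomial.X] f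

variable {T : Type*} [CommSemiring T] [Algebra R T] [Algebra S T] [IsScalarTower R S T]

theorem aeval_sliceX (b : S) (a : T) :
    Polynomial.aeval a (f.sliceX b) = aeval ![a, algebraMap S T b] f := by
  rw [sliceX, ← AlgHom.restrictScalars_apply R, comp_aeval_apply]
  congr 1
  ext i
  fin_cases i <;> simp

theorem aeval_sliceY (a : S) (b : T) :
    Polynomial.aeval b (f.sliceY a) = aeval ![algebraMap S T a, b] f := by
  rw [sliceY, ← AlgHom.restrictScalars_apply R, comp_aeval_apply]
  congr 1
  ext i
  fin_cases i <;> simp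

theorem eval_sliceX (b a : S) : (f.sliceX b).eval a = aeval ![a, b] f := by
  simpa using aeval_sliceX f b a

theorem eval_sliceY (a b : S) : (f.sliceY a).eval b = aeval ![a, b] f := by
  simpa using aeval_sliceY f a b

end Slice

variable {f : MvPolynomial (Fin 2) ℝ}

theorem conj_aeval (a b : ℂ) : conj (aeval ![a, b] f) = aeval ![conj a, conj b] f := by
  rw [← conjAe_coe, ← AlgEquiv.coe_toAlgHom, comp_aeval_apply]
  congr 1
  ext i
  fin_cases i <;> simp

theorem aeval_ofReal_pair (u v : ℝ) : aeval ![(u : ℂ), v] f = eval ![u, v] f := by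
  have h : ![(u : ℂ), v] = algebraMap ℝ ℂ ∘ ![u, v] := by
    funext i
    fin_cases i <;> rfl
  rw [h, aeval_algebraMap_apply]
  rfl

theorem aeval_mul_aeval_conj_swap {τ : ℂ} (hτ : ∀ a : ℂ, aeval ![a, τ] f = 0 → a.im = 0)
    (a b : ℂ) :
    aeval ![a, τ] f * aeval ![b, conj τ] f = aeval ![b, τ] f * aeval ![a, conj τ] f := by
  obtain ⟨c, q, hq⟩ := exists_eq_C_mul_map_of_forall_isRoot_im_eq_zero (p := f.sliceX τ)
    fun z hz => hτ z (by rwa [IsRoot, eval_sliceX] at hz)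
  have hslice (z : ℂ) : aeval ![z, τ] f = c * Polynomial.aeval z q := by
    rw [← eval_sliceX, hq, Polynomial.eval_mul, Polynomial.eval_C, eval_map_algebraMap]
  have hslice_conj (z : ℂ) : aeval ![z, conj τ] f = conj c * Polynomial.aeval z q := by
    rw [← conj_conj z, ← conj_aeval, hslice, map_mul, ← aeval_conj, conj_conj]
  rw [hslice, hslice, hslice_conj, hslice_conj]
  ring

theorem aeval_mul_aeval_swap (hne : ∀ a b : ℂ, a.im ≠ 0 → b.im ≠ 0 → aeval ![a, b] f ≠ 0)
    (a b c d : ℂ) : aeval ![a, b] f * aeval ![c, d] f = aeval ![a, d] f * aeval ![c, b] f := by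
  have key := eval_mul_eval_swap_of_conj (P := f.sliceY a) (Q := f.sliceY c) (fun τ hτ => by
    simp only [eval_sliceY]
    linear_combination aeval_mul_aeval_conj_swap
      (fun z hz => by_contra fun h => hne z τ h hτ hz) a c) b d
  simpa only [eval_sliceY] using key

theorem im_eq_zero_of_aeval_eq_zero_left
    (hne : ∀ a b : ℂ, a.im ≠ 0 → b.im ≠ 0 → aeval ![a, b] f ≠ 0) {a₀ b₀ z : ℂ}
    (h₀ : aeval ![a₀, b₀] f ≠ 0) (hz : aeval ![z, b₀] f = 0) : z.im = 0 := by
  by_contra h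
  have := aeval_mul_aeval_swap hne z I a₀ b₀
  rw [hz, zero_mul, mul_eq_zero] at this
  exact hne z I h (by simp) (this.resolve_right h₀)

theorem im_eq_zero_of_aeval_eq_zero_right
    (hne : ∀ a b : ℂ, a.im ≠ 0 → b.im ≠ 0 → aeval ![a, b] f ≠ 0) {a₀ b₀ z : ℂ}
    (h₀ : aeval ![a₀, b₀] f ≠ 0) (hz : aeval ![a₀, z] f = 0) : z.im = 0 := by
  by_contra h
  have := aeval_mul_aeval_swap hne I z a₀ b₀
  rw [hz, mul_zero, mul_eq_zero] at this
  exact hne I z (by simp) h (this.resolve_right h₀)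

theorem eq_aeval_X_mul_aeval_X
    (hswap : ∀ a b c d : ℂ, aeval ![a, b] f * aeval ![c, d] f = aeval ![a, d] f * aeval ![c, b] f)
    {u v : ℝ} (huv : eval ![u, v] f ≠ 0) :
    f = Polynomial.aeval (X 0) (Polynomial.C (eval ![u, v] f)⁻¹ * f.sliceX v) *
      Polynomial.aeval (X 1) (f.sliceY u) := by
  apply map_injective (algebraMap ℝ ℂ) (FaithfulSMul.algebraMap_injective ℝ ℂ)
  refine MvPolynomial.funext fun x => ?_
  obtain ⟨a, b, rfl⟩ : ∃ a b, x = ![a, b] := ⟨x 0, x 1, by ext i; fin_cases i <;> rfl⟩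
  rw [eval_map, eval_map, ← aeval_def, ← aeval_def, map_mul, ← Polynomial.aeval_algHom_apply,
    ← Polynomial.aeval_algHom_apply, aeval_X, aeval_X]
  simp only [Matrix.cons_val_zero, Matrix.cons_val_one, map_mul, Polynomial.aeval_C, aeval_sliceX,
    aeval_sliceY, Complex.coe_algebraMap, Complex.ofReal_inv]
  have hk : ((eval ![u, v] f : ℝ) : ℂ) ≠ 0 := by exact_mod_cast huv
  have := hswap a b u v
  rw [aeval_ofReal_pair] at this
  rw [mul_assoc, eq_inv_mul_iff_mul_eq₀ hk, mul_comm]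
  exact this

end MvPolynomial

/-- A real upper polynomial in two variables in which every variable occurs only
with even exponents factors as `g(x)·h(y)` with `g, h` real-rooted univariate
real polynomials. -/
theorem even_exponents_factor (f : MvPolynomial (Fin 2) ℝ)
    (hf : IsUpper (MvPolynomial.map (algebraMap ℝ ℂ) f))
    (heven : ∀ m ∈ f.support, Even (m 0) ∧ Even (m 1)) :
    ∃ g h : Polynomial ℝ, g ≠ 0 ∧ h ≠ 0 ∧
      (∀ z : ℂ, Polynomial.aeval z g = 0 → z.im = 0) ∧
      (∀ z : ℂ, Polynomial.aeval z h = 0 → z.im = 0) ∧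
      f = Polynomial.aeval (MvPolynomial.X 0) g * Polynomial.aeval (MvPolynomial.X 1) h := by
  have hne (a b : ℂ) (ha : a.im ≠ 0) (hb : b.im ≠ 0) : MvPolynomial.aeval ![a, b] f ≠ 0 :=
    MvPolynomial.aeval_ne_zero_of_isUpper_of_even hf
      (fun m hm => Fin.forall_fin_two.2 (heven m hm)) (Fin.forall_fin_two.2 ⟨ha, hb⟩)
  obtain ⟨u, v, huv⟩ : ∃ u v : ℝ, MvPolynomial.eval ![u, v] f ≠ 0 := by
    by_contra! h
    have hf0 : f = 0 := MvPolynomial.funext fun x => by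
      rw [show x = ![x 0, x 1] by ext i; fin_cases i <;> rfl]
      simpa using h (x 0) (x 1)
    exact hne I I (by simp) (by simp) (by simp [hf0])
  have huv' : MvPolynomial.aeval ![(u : ℂ), v] f ≠ 0 := by
    rwa [MvPolynomial.aeval_ofReal_pair, ofReal_ne_zero]
  refine ⟨C (MvPolynomial.eval ![u, v] f)⁻¹ * f.sliceX v, f.sliceY u, ?_, ?_,
    fun z hz => ?_, fun z hz => ?_,
    MvPolynomial.eq_aeval_X_mul_aeval_X (MvPolynomial.aeval_mul_aeval_swap hne) huv⟩
  · intro h0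
    simpa [MvPolynomial.eval_sliceX, huv] using congrArg (eval u) h0
  · intro h0
    simpa [MvPolynomial.eval_sliceY, huv] using congrArg (eval v) h0
  · simp only [map_mul, aeval_C, MvPolynomial.aeval_sliceX, mul_eq_zero] at hz
    exact MvPolynomial.im_eq_zero_of_aeval_eq_zero_left hne huv'
      (hz.resolve_left (by simpa using huv))
  · rw [MvPolynomial.aeval_sliceY] at hz
    exact MvPolynomial.im_eq_zero_of_aeval_eq_zero_right hne huv' hz
end
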